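/- arXiv:1602.06567 — 9 statements merged into one kernel-verified Lean document; each statement's English description precedes it below -/
import Mathlib

section
/- Let K ⊆ ℝ² be a centrally symmetric convex body (i.e., K is compact, convex, has nonempty interior, and K = -K). Then there exist linearly independent vectors v, w ∈ ∂K such that for all x ∈ K one has |det(x, w)| ≤ |det(v, w)| and |det(x, v)| ≤ |det(v, w)|. (Geometrically: the parallelogram with vertices ±v ± w is circumscribed about K and touches ∂K at the midpoints ±v, ±w of its sides; v and w are called conjugate directions of K.) -/
/-- The standard determinant form on ℝ². -/
def det2 (x y : ℝ × ℝ) : ℝ := x.1 * y.2 - x.2 * y.1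

/-- If `v` is interior to `K` and `w ≠ 0`, then `v` cannot maximize `|det2 · w|` on `K`. -/
lemma det2_aux {K : Set (ℝ × ℝ)} (v w : ℝ × ℝ) (hvint : v ∈ interior K)
    (hw : w ≠ 0) (hmax : ∀ x ∈ K, |det2 x w| ≤ |det2 v w|) : False := by
  obtain ⟨δ, hδ, hball⟩ := Metric.isOpen_iff.mp isOpen_interior v hvint
  set u : ℝ × ℝ := (w.2, -w.1) with hu_def
  have hu : u ≠ 0 := by
    simp only [hu_def, Prod.ext_iff, Prod.fst_zero, Prod.snd_zero, neg_eq_zero, ne_eq]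
    intro h
    exact hw (Prod.ext h.2 h.1)
  have hun : 0 < ‖u‖ := norm_pos_iff.mpr hu
  set t : ℝ := δ / (2 * ‖u‖) with ht_def
  have ht : 0 < t := div_pos hδ (by positivity)
  have hd : 0 < w.1 ^ 2 + w.2 ^ 2 := by
    have : w.1 ≠ 0 ∨ w.2 ≠ 0 := by
      by_contra hc
      push_neg at hc
      exact hw (Prod.ext hc.1 hc.2)
    rcases this with h1 | h2
    · positivity
    · positivity
  set s : ℝ := det2 v w with hs_def
  set c : ℝ := if 0 ≤ s then t else -t with hc_def
  have hcabs : |c| = t := by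
    rcases le_or_gt 0 s with h | h
    · simp [hc_def, h, abs_of_pos ht]
    · simp [hc_def, not_le.mpr h, abs_of_pos ht]
  have hmem : v + c • u ∈ K := by
    apply interior_subset
    apply hball
    have : dist (v + c • u) v = |c| * ‖u‖ := by
      rw [dist_eq_norm]
      simp [norm_smul, abs_of_pos]
    rw [Metric.mem_ball, this, hcabs, ht_def]
    rw [div_mul_eq_mul_div, mul_comm 2 ‖u‖, ← div_div, mul_div_assoc,
      div_self (ne_of_gt hun), mul_one]
    linarith
  have hdet : det2 (v + c • u) w = s + c * (w.1 ^ 2 + w.2 ^ 2) := by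
    simp [det2, hs_def, hu_def, Prod.smul_def, smul_eq_mul]
    ring
  have hle := hmax _ hmem
  rw [hdet] at hle
  have habs : |s + c * (w.1 ^ 2 + w.2 ^ 2)| = |s| + t * (w.1 ^ 2 + w.2 ^ 2) := by
    rcases le_or_gt 0 s with h | h
    · have hc : c = t := by simp [hc_def, h]
      rw [hc, abs_of_nonneg (by nlinarith), abs_of_nonneg h]
    · have hc : c = -t := by simp [hc_def, not_le.mpr h]
      rw [hc, abs_of_nonpos (by nlinarith), abs_of_neg h]
      ring
  rw [habs] at hle
  nlinarith

/-- Any centrally symmetric convex body in the plane has a pair of conjugate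
directions `v, w ∈ ∂K`: the parallelogram with vertices `±v ± w` is circumscribed
about `K` and touches `∂K` at the midpoints of its sides. -/
theorem stmt_0 (K : Set (ℝ × ℝ)) (hKc : IsCompact K) (hKconv : Convex ℝ K)
    (hKint : (interior K).Nonempty) (hKsymm : K = -K) :
    ∃ v w : ℝ × ℝ, v ∈ frontier K ∧ w ∈ frontier K ∧
      LinearIndependent ℝ ![v, w] ∧
      ∀ x ∈ K, |det2 x w| ≤ |det2 v w| ∧ |det2 x v| ≤ |det2 v w| := by
  -- 0 is in the interior of K
  obtain ⟨x₀, hx₀⟩ := hKint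
  have hx₀' : -x₀ ∈ interior K := by
    have hopen : IsOpen (-(interior K)) := isOpen_interior.neg
    have hsub : -(interior K) ⊆ K := by
      conv_rhs => rw [hKsymm]
      exact Set.neg_subset_neg.mpr interior_subset
    exact interior_maximal hsub hopen (Set.neg_mem_neg.mpr hx₀)
  have h0 : (0 : ℝ × ℝ) ∈ interior K := by
    have := hKconv.interior hx₀ hx₀' (le_of_lt one_half_pos) (le_of_lt one_half_pos)
      (by norm_num)
    simpa using this
  obtain ⟨ε, hε, hball⟩ := Metric.isOpen_iff.mp isOpen_interior 0 h0
  -- two points with nonzero determinant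
  have ha : ((ε / 2, 0) : ℝ × ℝ) ∈ K := by
    apply interior_subset; apply hball
    rw [Metric.mem_ball, dist_zero_right]
    have : ‖((ε / 2, 0) : ℝ × ℝ)‖ = ε / 2 := by
      rw [Prod.norm_def]
      simp [Real.norm_eq_abs]
      rw [abs_of_pos hε]
      exact max_eq_left (by positivity)
    rw [this]; linarith
  have hb : ((0, ε / 2) : ℝ × ℝ) ∈ K := by
    apply interior_subset; apply hball
    rw [Metric.mem_ball, dist_zero_right]
    have : ‖((0, ε / 2) : ℝ × ℝ)‖ = ε / 2 := by
      rw [Prod.norm_def]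
      simp [Real.norm_eq_abs]
      rw [abs_of_pos hε]
      exact max_eq_right (by positivity)
    rw [this]; linarith
  -- maximize |det2| over K × K
  have hcont : ContinuousOn (fun p : (ℝ × ℝ) × (ℝ × ℝ) => |det2 p.1 p.2|) (K ×ˢ K) := by
    apply Continuous.continuousOn
    apply continuous_abs.comp
    unfold det2
    fun_prop
  obtain ⟨⟨v, w⟩, hvw, hmax⟩ := (hKc.prod hKc).exists_isMaxOn
    (Set.nonempty_of_mem (Set.mk_mem_prod ha hb)) hcont
  obtain ⟨hvK, hwK⟩ := Set.mem_prod.mp hvw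
  have hmax' : ∀ x ∈ K, ∀ y ∈ K, |det2 x y| ≤ |det2 v w| := fun x hx y hy =>
    hmax (Set.mk_mem_prod hx hy)
  -- |det2 v w| > 0
  have hD : det2 v w ≠ 0 := by
    have := hmax' _ ha _ hb
    have hab : det2 ((ε / 2, 0) : ℝ × ℝ) ((0, ε / 2) : ℝ × ℝ) = ε ^ 2 / 4 := by
      simp [det2]; ring
    rw [hab] at this
    intro h
    rw [h] at this
    simp at this
    nlinarith
  have hwne : w ≠ 0 := by
    intro h
    apply hD
    simp [det2, h]
  have hvne : v ≠ 0 := by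
    intro h
    apply hD
    simp [det2, h]
  -- det2 symmetry: |det2 x y| = |det2 y x|
  have hsymm : ∀ x y : ℝ × ℝ, |det2 x y| = |det2 y x| := by
    intro x y
    rw [show det2 x y = -det2 y x by simp [det2]; ring, abs_neg]
  refine ⟨v, w, ?_, ?_, ?_, ?_⟩
  · -- v ∈ frontier K
    rw [hKc.isClosed.frontier_eq, Set.mem_diff]
    refine ⟨hvK, fun hvint => ?_⟩
    exact det2_aux v w hvint hwne (fun x hx => hmax' x hx w hwK)
  · -- w ∈ frontier K
    rw [hKc.isClosed.frontier_eq, Set.mem_diff]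
    refine ⟨hwK, fun hwint => ?_⟩
    apply det2_aux w v hwint hvne
    intro x hx
    calc |det2 x v| ≤ |det2 v w| := hmax' x hx v hvK
      _ = |det2 w v| := hsymm v w
  · -- linear independence
    rw [linearIndependent_fin2]
    constructor
    · simpa using hwne
    · intro a hav
      apply hD
      simp only [Matrix.cons_val_one, Matrix.head_cons, Matrix.cons_val_zero] at hav
      rw [← hav]
      simp [det2, Prod.smul_def, smul_eq_mul]
      ring
  · intro x hx
    refine ⟨hmax' x hx w hwK, ?_⟩
    rw [hsymm x v]
    calc |det2 v x| = |det2 x v| := (hsymm x v).symm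
      _ ≤ |det2 v w| := hmax' x hx v hvK
end

section
/- Let K ⊆ ℝ² be a centrally symmetric convex body, and let v, w ∈ ∂K be linearly independent with |det(x, w)| ≤ |det(v, w)| and |det(x, v)| ≤ |det(v, w)| for all x ∈ K. Set Q₁ := {a·v + b·w : a, b ≥ 0} and Q₂ := {a·(−v) + b·w : a, b ≥ 0}. If p ∈ ∂K ∩ Q₁ with p ≠ v and p ≠ w, and u ∈ ℝ² is a nonzero vector such that the line through p with direction u supports K (i.e., det(x, u) ≤ det(p, u) for all x ∈ K, or det(x, u) ≥ det(p, u) for all x ∈ K), then u ∈ Q₂ ∪ (−Q₂). -/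
/-!
Write `p = a v + b w` and `u = α v + β w`. The conjugacy condition gives `a, b ≤ 1`, and since
`K = -K` a supporting line at `p` with direction `u` forces `|det(x, u)| ≤ |det(p, u)|` on `K`;
at `x = v` and `x = w` this reads `|β|, |α| ≤ |aβ - bα|`. If `α, β > 0` (the case `α, β < 0` is
symmetric), then `-α ≤ -bα ≤ aβ - bα ≤ aβ ≤ β`, and `|aβ - bα|` can reach both `α` and `β` only
for `(a, b) = (1, 0)` or `(0, 1)`, i.e. `p = v` or `p = w`. Hence `αβ ≤ 0`, i.e. `u ∈ Q₂ ∪ -Q₂`.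
-/

lemma det2_neg_left (x y : ℝ × ℝ) : det2 (-x) y = -det2 x y := by
  simp only [det2, Prod.fst_neg, Prod.snd_neg]
  ring

lemma det2_smul_add_smul (a b c d : ℝ) (v w : ℝ × ℝ) :
    det2 (a • v + b • w) (c • v + d • w) = (a * d - b * c) * det2 v w := by
  simp only [det2, Prod.fst_add, Prod.snd_add, Prod.smul_fst, Prod.smul_snd, smul_eq_mul]
  ring

lemma exists_smul_add_smul_eq_of_linearIndependent {K E : Type*} [Field K] [AddCommGroup E]
    [Module K E] [FiniteDimensional K E] (hE : Module.finrank K E = 2) {v w : E}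
    (hind : LinearIndependent K ![v, w]) (u : E) : ∃ α β : K, α • v + β • w = u := by
  have hspan := hind.span_eq_top_of_card_eq_finrank' (by simp [hE])
  rw [Matrix.range_cons_cons_empty] at hspan
  exact Submodule.mem_span_pair.1 (hspan ▸ Submodule.mem_top)

lemma det2_ne_zero_of_linearIndependent {v w : ℝ × ℝ} (hind : LinearIndependent ℝ ![v, w]) :
    det2 v w ≠ 0 := by
  have hE : Module.finrank ℝ (ℝ × ℝ) = 2 := by simp
  obtain ⟨a, b, he₁⟩ := exists_smul_add_smul_eq_of_linearIndependent hE hind (1, 0)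
  obtain ⟨c, d, he₂⟩ := exists_smul_add_smul_eq_of_linearIndependent hE hind (0, 1)
  have h := det2_smul_add_smul a b c d v w
  rw [he₁, he₂] at h
  intro hD
  rw [hD, mul_zero] at h
  norm_num [det2] at h

/-- A supporting line of a centrally symmetric set `K` at `p` also supports `-K = K` at `-p`,
so `K` lies in the strip between the two lines. -/
lemma abs_det2_le_of_supports {K : Set (ℝ × ℝ)} (hKsymm : K = -K) {p u : ℝ × ℝ}
    (hsupp : (∀ x ∈ K, det2 x u ≤ det2 p u) ∨ (∀ x ∈ K, det2 p u ≤ det2 x u))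
    {x : ℝ × ℝ} (hx : x ∈ K) : |det2 x u| ≤ |det2 p u| := by
  have hnx : -x ∈ K := by rw [hKsymm]; simpa using hx
  rw [abs_le]
  rcases hsupp with h | h
  · have := h (-x) hnx
    rw [det2_neg_left] at this
    constructor <;> linarith [h x hx, le_abs_self (det2 p u)]
  · have := h (-x) hnx
    rw [det2_neg_left] at this
    constructor <;> linarith [h x hx, neg_abs_le (det2 p u)]

lemma coeffs_le_one_of_conjugate {K : Set (ℝ × ℝ)} {v w : ℝ × ℝ} (hD : det2 v w ≠ 0)
    (hconj : ∀ x ∈ K, |det2 x w| ≤ |det2 v w| ∧ |det2 x v| ≤ |det2 v w|)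
    {a b : ℝ} (ha₀ : 0 ≤ a) (hb₀ : 0 ≤ b) (hpK : a • v + b • w ∈ K) : a ≤ 1 ∧ b ≤ 1 := by
  have hD' : 0 < |det2 v w| := abs_pos.2 hD
  obtain ⟨hpw, hpv⟩ := hconj _ hpK
  rw [show det2 (a • v + b • w) w = a * det2 v w by simpa using det2_smul_add_smul a b 0 1 v w,
    abs_mul, abs_of_nonneg ha₀] at hpw
  rw [show det2 (a • v + b • w) v = -(b * det2 v w) by simpa using det2_smul_add_smul a b 1 0 v w,
    abs_neg, abs_mul, abs_of_nonneg hb₀] at hpv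
  exact ⟨(mul_le_iff_le_one_left hD').1 hpw, (mul_le_iff_le_one_left hD').1 hpv⟩

lemma abs_le_abs_mul_sub_mul_of_supports {K : Set (ℝ × ℝ)} (hKsymm : K = -K) {v w : ℝ × ℝ}
    (hv : v ∈ K) (hw : w ∈ K) (hD : det2 v w ≠ 0) {a b α β : ℝ}
    (hsupp : (∀ x ∈ K, det2 x (α • v + β • w) ≤ det2 (a • v + b • w) (α • v + β • w)) ∨
      (∀ x ∈ K, det2 (a • v + b • w) (α • v + β • w) ≤ det2 x (α • v + β • w))) :
    |α| ≤ |a * β - b * α| ∧ |β| ≤ |a * β - b * α| := by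
  have hD' : 0 < |det2 v w| := abs_pos.2 hD
  have hdet (c d : ℝ) : det2 (c • v + d • w) (α • v + β • w) = (c * β - d * α) * det2 v w :=
    det2_smul_add_smul c d α β v w
  have hvu := abs_det2_le_of_supports hKsymm hsupp hv
  have hwu := abs_det2_le_of_supports hKsymm hsupp hw
  rw [show det2 v (α • v + β • w) = β * det2 v w by simpa using hdet 1 0, hdet,
    abs_mul, abs_mul] at hvu
  rw [show det2 w (α • v + β • w) = -(α * det2 v w) by simpa using hdet 0 1, hdet,
    abs_neg, abs_mul, abs_mul] at hwu
  exact ⟨le_of_mul_le_mul_right hwu hD', le_of_mul_le_mul_right hvu hD'⟩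

lemma eq_one_zero_or_eq_zero_one_of_le_abs_mul_sub_mul {a b α β : ℝ}
    (ha₀ : 0 ≤ a) (ha₁ : a ≤ 1) (hb₀ : 0 ≤ b) (hb₁ : b ≤ 1) (hα : 0 < α) (hβ : 0 < β)
    (hαle : α ≤ |a * β - b * α|) (hβle : β ≤ |a * β - b * α|) :
    (a = 1 ∧ b = 0) ∨ (a = 0 ∧ b = 1) := by
  rcases abs_cases (a * β - b * α) with ⟨he, -⟩ | ⟨he, -⟩ <;> rw [he] at hαle hβle
  · have ha : a = 1 := by nlinarith [mul_nonneg hb₀ hα.le]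
    subst ha
    exact Or.inl ⟨rfl, by nlinarith⟩
  · have hb : b = 1 := by nlinarith [mul_nonneg ha₀ hβ.le]
    subst hb
    exact Or.inr ⟨by nlinarith, rfl⟩

lemma mul_nonpos_of_abs_le_abs_mul_sub_mul {a b α β : ℝ}
    (ha₀ : 0 ≤ a) (ha₁ : a ≤ 1) (hb₀ : 0 ≤ b) (hb₁ : b ≤ 1)
    (h₁₀ : (a, b) ≠ (1, 0)) (h₀₁ : (a, b) ≠ (0, 1))
    (hαle : |α| ≤ |a * β - b * α|) (hβle : |β| ≤ |a * β - b * α|) : α * β ≤ 0 := by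
  by_contra! hpos
  have hcorner : (a = 1 ∧ b = 0) ∨ (a = 0 ∧ b = 1) := by
    rcases mul_pos_iff.1 hpos with ⟨hα, hβ⟩ | ⟨hα, hβ⟩
    · rw [abs_of_pos hα] at hαle
      rw [abs_of_pos hβ] at hβle
      exact eq_one_zero_or_eq_zero_one_of_le_abs_mul_sub_mul ha₀ ha₁ hb₀ hb₁ hα hβ hαle hβle
    · have habs : |a * β - b * α| = |a * -β - b * -α| := by
        rw [← abs_neg]; congr 1; ring
      rw [abs_of_neg hα, habs] at hαle
      rw [abs_of_neg hβ, habs] at hβle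
      exact eq_one_zero_or_eq_zero_one_of_le_abs_mul_sub_mul ha₀ ha₁ hb₀ hb₁
        (neg_pos.2 hα) (neg_pos.2 hβ) hαle hβle
  rcases hcorner with ⟨rfl, rfl⟩ | ⟨rfl, rfl⟩
  exacts [h₁₀ rfl, h₀₁ rfl]

lemma smul_add_smul_mem_cone_neg_union {E : Type*} [AddCommGroup E] [Module ℝ E] (v w : E)
    {α β : ℝ} (hαβ : α * β ≤ 0) :
    α • v + β • w ∈ {p | ∃ a b : ℝ, 0 ≤ a ∧ 0 ≤ b ∧ p = a • (-v) + b • w} ∪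
      -{p | ∃ a b : ℝ, 0 ≤ a ∧ 0 ≤ b ∧ p = a • (-v) + b • w} := by
  rcases mul_nonpos_iff.1 hαβ with ⟨hα, hβ⟩ | ⟨hα, hβ⟩
  · exact Or.inr ⟨α, -β, hα, neg_nonneg.2 hβ, by rw [neg_add, smul_neg, neg_smul]⟩
  · exact Or.inl ⟨-α, β, neg_nonneg.2 hα, hβ, by simp⟩

theorem stmt_1_general (K : Set (ℝ × ℝ)) (hKc : IsCompact K) (hKsymm : K = -K)
    (v w : ℝ × ℝ) (hv : v ∈ frontier K) (hw : w ∈ frontier K)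
    (hind : LinearIndependent ℝ ![v, w])
    (hconj : ∀ x ∈ K, |det2 x w| ≤ |det2 v w| ∧ |det2 x v| ≤ |det2 v w|)
    (Q₁ Q₂ : Set (ℝ × ℝ))
    (hQ₁ : Q₁ = {p | ∃ a b : ℝ, 0 ≤ a ∧ 0 ≤ b ∧ p = a • v + b • w})
    (hQ₂ : Q₂ = {p | ∃ a b : ℝ, 0 ≤ a ∧ 0 ≤ b ∧ p = a • (-v) + b • w})
    (p : ℝ × ℝ) (hp : p ∈ frontier K ∩ Q₁) (hpv : p ≠ v) (hpw : p ≠ w)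
    (u : ℝ × ℝ)
    (hsupp : (∀ x ∈ K, det2 x u ≤ det2 p u) ∨ (∀ x ∈ K, det2 p u ≤ det2 x u)) :
    u ∈ Q₂ ∪ -Q₂ := by
  subst hQ₁ hQ₂
  have hfr := hKc.isClosed.frontier_subset
  have hD := det2_ne_zero_of_linearIndependent hind
  obtain ⟨hpF, a, b, ha₀, hb₀, rfl⟩ := hp
  obtain ⟨α, β, rfl⟩ := exists_smul_add_smul_eq_of_linearIndependent (by simp) hind u
  obtain ⟨ha₁, hb₁⟩ := coeffs_le_one_of_conjugate hD hconj ha₀ hb₀ (hfr hpF)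
  obtain ⟨hα, hβ⟩ := abs_le_abs_mul_sub_mul_of_supports hKsymm (hfr hv) (hfr hw) hD hsupp
  refine smul_add_smul_mem_cone_neg_union v w
    (mul_nonpos_of_abs_le_abs_mul_sub_mul ha₀ ha₁ hb₀ hb₁ ?_ ?_ hα hβ)
  · rintro ⟨⟩; exact hpv (by simp)
  · rintro ⟨⟩; exact hpw (by simp)

/-- If `v, w` are conjugate directions of a centrally symmetric convex body `K`
in the plane, then the direction of any supporting line of `K` at a point of the
first-quadrant arc (other than `v, w`) lies in the second quadrant. -/
theorem stmt_1 (K : Set (ℝ × ℝ)) (hKc : IsCompact K) (hKconv : Convex ℝ K)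
    (hKint : (interior K).Nonempty) (hKsymm : K = -K)
    (v w : ℝ × ℝ) (hv : v ∈ frontier K) (hw : w ∈ frontier K)
    (hind : LinearIndependent ℝ ![v, w])
    (hconj : ∀ x ∈ K, |det2 x w| ≤ |det2 v w| ∧ |det2 x v| ≤ |det2 v w|)
    (Q₁ Q₂ : Set (ℝ × ℝ))
    (hQ₁ : Q₁ = {p | ∃ a b : ℝ, 0 ≤ a ∧ 0 ≤ b ∧ p = a • v + b • w})
    (hQ₂ : Q₂ = {p | ∃ a b : ℝ, 0 ≤ a ∧ 0 ≤ b ∧ p = a • (-v) + b • w})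
    (p : ℝ × ℝ) (hp : p ∈ frontier K ∩ Q₁) (hpv : p ≠ v) (hpw : p ≠ w)
    (u : ℝ × ℝ) (hu : u ≠ 0)
    (hsupp : (∀ x ∈ K, det2 x u ≤ det2 p u) ∨ (∀ x ∈ K, det2 p u ≤ det2 x u)) :
    u ∈ Q₂ ∪ -Q₂ :=
  stmt_1_general K hKc hKsymm v w hv hw hind hconj Q₁ Q₂ hQ₁ hQ₂ p hp hpv hpw u hsupp
end

section
/- Let K ⊆ ℝ² be a centrally symmetric convex body, and let v, w ∈ ∂K be linearly independent with |det(x, w)| ≤ |det(v, w)| and |det(x, v)| ≤ |det(v, w)| for all x ∈ K. Set Q₁ := {a·v + b·w : a, b ≥ 0} and Q₂ := {a·(−v) + b·w : a, b ≥ 0}. Then for every nonzero u ∈ Q₂ there exists a point p ∈ ∂K ∩ Q₁ such that |det(x, u)| ≤ |det(p, u)| for all x ∈ K (so the line through p with direction u supports K at p). -/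
lemma det2_ne_zero_of_indep (v w : ℝ × ℝ) (hind : LinearIndependent ℝ ![v, w]) :
    det2 v w ≠ 0 := by
  intro h0
  rw [LinearIndependent.pair_iff] at hind
  unfold det2 at h0
  have h1 := hind w.1 (-v.1) (by
    apply Prod.ext <;> simp <;> nlinarith)
  have h2 := hind w.2 (-v.2) (by
    apply Prod.ext <;> simp <;> nlinarith)
  have hv0 : v = 0 := by
    have e1 : v.1 = 0 := by have := h1.2; linarith [neg_eq_zero.mp h1.2]
    have e2 : v.2 = 0 := by have := h2.2; linarith [neg_eq_zero.mp h2.2]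
    exact Prod.ext (by simp [e1]) (by simp [e2])
  have := hind 1 0 (by simp [hv0])
  exact one_ne_zero this.1

set_option maxHeartbeats 1000000 in
/-- If `v, w` are conjugate directions of a centrally symmetric convex body `K`
in the plane, then every direction of the second quadrant supports `K` at some
point of the first-quadrant arc of `∂K`. -/
theorem stmt_2 (K : Set (ℝ × ℝ)) (hKc : IsCompact K) (hKconv : Convex ℝ K)
    (hKint : (interior K).Nonempty) (hKsymm : K = -K)
    (v w : ℝ × ℝ) (hv : v ∈ frontier K) (hw : w ∈ frontier K)
    (hind : LinearIndependent ℝ ![v, w])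
    (hconj : ∀ x ∈ K, |det2 x w| ≤ |det2 v w| ∧ |det2 x v| ≤ |det2 v w|)
    (Q₁ Q₂ : Set (ℝ × ℝ))
    (hQ₁ : Q₁ = {p | ∃ a b : ℝ, 0 ≤ a ∧ 0 ≤ b ∧ p = a • v + b • w})
    (hQ₂ : Q₂ = {p | ∃ a b : ℝ, 0 ≤ a ∧ 0 ≤ b ∧ p = a • (-v) + b • w})
    (u : ℝ × ℝ) (hu : u ≠ 0) (huQ : u ∈ Q₂) :
    ∃ p ∈ frontier K ∩ Q₁, ∀ x ∈ K, |det2 x u| ≤ |det2 p u| := by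
  have hD : det2 v w ≠ 0 := det2_ne_zero_of_indep v w hind
  rw [hQ₂] at huQ
  obtain ⟨a, b, ha, hb, hu_eq⟩ := huQ
  -- components of u
  have hu1 : u.1 = -(a * v.1) + b * w.1 := by rw [hu_eq]; simp
  have hu2 : u.2 = -(a * v.2) + b * w.2 := by rw [hu_eq]; simp
  -- key bilinear identity
  have hxu : ∀ x : ℝ × ℝ, det2 x u = a * det2 v x + b * det2 x w := by
    intro x; unfold det2; rw [hu1, hu2]; ring
  -- frontier ⊆ K
  have hKclosed : IsClosed K := hKc.isClosed
  have hfrK : frontier K ⊆ K := by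
    rw [hKclosed.frontier_eq]; exact Set.diff_subset
  have hvK : v ∈ K := hfrK hv
  have hwK : w ∈ K := hfrK hw
  -- edge cases
  by_cases hb0 : b = 0
  · -- u = -a v; take p = w
    refine ⟨w, ⟨hw, ?_⟩, ?_⟩
    · rw [hQ₁]; exact ⟨0, 1, le_refl 0, zero_le_one, by simp⟩
    · intro x hx
      have h1 := (hconj x hx).2
      have hwu : det2 w u = a * det2 v w := by rw [hxu w, hb0]; ring
      have hxu' : det2 x u = a * det2 v x := by rw [hxu x, hb0]; ring
      have hvx : |det2 v x| = |det2 x v| := by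
        have h' : det2 v x = -det2 x v := by unfold det2; ring
        rw [h', abs_neg]
      rw [hwu, hxu', abs_mul, abs_mul, hvx]
      exact mul_le_mul_of_nonneg_left h1 (abs_nonneg a)
  by_cases ha0 : a = 0
  · -- u = b w; take p = v
    refine ⟨v, ⟨hv, ?_⟩, ?_⟩
    · rw [hQ₁]; exact ⟨1, 0, zero_le_one, le_refl 0, by simp⟩
    · intro x hx
      have h1 := (hconj x hx).1
      have hvu : det2 v u = b * det2 v w := by rw [hxu v, ha0]; unfold det2; ring
      have hxu' : det2 x u = b * det2 x w := by rw [hxu x, ha0]; ring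
      rw [hvu, hxu', abs_mul, abs_mul]
      exact mul_le_mul_of_nonneg_left h1 (abs_nonneg b)
  -- main case: a > 0, b > 0
  have hapos : 0 < a := lt_of_le_of_ne ha (Ne.symm ha0)
  have hbpos : 0 < b := lt_of_le_of_ne hb (Ne.symm hb0)
  obtain ⟨c, hcdef⟩ : ∃ c : ℝ, c = if 0 < det2 v w then 1 else -1 := ⟨_, rfl⟩
  have hcD : c * det2 v w = |det2 v w| := by
    by_cases h : 0 < det2 v w
    · simp [hcdef, h, abs_of_pos h]
    · have hneg : det2 v w < 0 := lt_of_le_of_ne (not_lt.mp h) hD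
      simp [hcdef, h, abs_of_neg hneg]
  have hc2 : c * c = 1 := by
    by_cases h : 0 < det2 v w <;> simp [hcdef, h]
  have hcabs : |c| = 1 := by
    by_cases h : 0 < det2 v w <;> simp [hcdef, h]
  have hDabs : 0 < |det2 v w| := abs_pos.mpr hD
  -- maximize f = c * det2 · u on K
  have hKne : K.Nonempty := ⟨v, hvK⟩
  have hcont : Continuous (fun x : ℝ × ℝ => c * det2 x u) := by
    exact continuous_const.mul ((continuous_fst.mul continuous_const).sub
      (continuous_snd.mul continuous_const))
  obtain ⟨p, hpK, hpmax⟩ := hKc.exists_isMaxOn hKne hcont.continuousOn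
  obtain ⟨A, hAdef⟩ : ∃ A : ℝ, A = det2 p w := ⟨_, rfl⟩
  obtain ⟨B, hBdef⟩ : ∃ B : ℝ, B = det2 v p := ⟨_, rfl⟩
  obtain ⟨D, hDdef⟩ : ∃ D : ℝ, D = det2 v w := ⟨_, rfl⟩
  have hD' : D ≠ 0 := hDdef ▸ hD
  have hcD' : c * D = |D| := by rw [hDdef]; exact hcD
  have hDabs' : 0 < |D| := hDdef ▸ hDabs
  have hpu : det2 p u = a * B + b * A := by rw [hAdef, hBdef]; exact hxu p
  have hvu : det2 v u = b * D := by rw [hxu v, hDdef]; unfold det2; ring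
  have hwu : det2 w u = a * D := by rw [hxu w, hDdef]; unfold det2; ring
  -- max inequalities at v and w
  have hmv : c * (b * D) ≤ c * (a * B + b * A) := by
    have := hpmax hvK
    simp only [Set.mem_setOf_eq] at this
    rwa [hvu, hpu] at this
  have hmw : c * (a * D) ≤ c * (a * B + b * A) := by
    have := hpmax hwK
    simp only [Set.mem_setOf_eq] at this
    rwa [hwu, hpu] at this
  -- conjugacy at p
  have hA1 : |A| ≤ |D| := by rw [hAdef, hDdef]; exact (hconj p hpK).1
  have hB1 : |B| ≤ |D| := by
    have h := (hconj p hpK).2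
    have hpv : det2 v p = -det2 p v := by unfold det2; ring
    rw [hBdef, hDdef, hpv, abs_neg]
    exact h
  have hcA_le : c * A ≤ |D| :=
    le_trans (le_trans (le_abs_self _) (by rw [abs_mul, hcabs, one_mul])) hA1
  have hcB_le : c * B ≤ |D| :=
    le_trans (le_trans (le_abs_self _) (by rw [abs_mul, hcabs, one_mul])) hB1
  -- positivity of cone coordinates
  have hcA : 0 ≤ c * A := by nlinarith [hcD', hmw, hcB_le]
  have hcB : 0 ≤ c * B := by nlinarith [hcD', hmv, hcA_le]
  have hcpos : 0 < c * D := by rw [hcD']; exact hDabs'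
  have hADmul : 0 ≤ A * D := by
    have h1 : 0 ≤ (c * A) * (c * D) := mul_nonneg hcA (le_of_lt hcpos)
    have h2 : (c * A) * (c * D) = (c * c) * (A * D) := by ring
    rw [h2, hc2, one_mul] at h1
    exact h1
  have hBDmul : 0 ≤ B * D := by
    have h1 : 0 ≤ (c * B) * (c * D) := mul_nonneg hcB (le_of_lt hcpos)
    have h2 : (c * B) * (c * D) = (c * c) * (B * D) := by ring
    rw [h2, hc2, one_mul] at h1
    exact h1
  have hAD : 0 ≤ A / D := by
    have he : A / D = (A * D) / D ^ 2 := by field_simp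
    rw [he]; exact div_nonneg hADmul (sq_nonneg D)
  have hBD : 0 ≤ B / D := by
    have he : B / D = (B * D) / D ^ 2 := by field_simp
    rw [he]; exact div_nonneg hBDmul (sq_nonneg D)
  -- Cramer: p = (A/D) • v + (B/D) • w
  have hp_cone : p ∈ Q₁ := by
    rw [hQ₁]
    refine ⟨A / D, B / D, hAD, hBD, ?_⟩
    have e1 : p.1 * D = A * v.1 + B * w.1 := by
      rw [hAdef, hBdef, hDdef]; unfold det2; ring
    have e2 : p.2 * D = A * v.2 + B * w.2 := by
      rw [hAdef, hBdef, hDdef]; unfold det2; ring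
    apply Prod.ext
    · simp only [Prod.fst_add, Prod.smul_fst, smul_eq_mul]
      field_simp
      linarith [e1]
    · simp only [Prod.snd_add, Prod.smul_snd, smul_eq_mul]
      field_simp
      linarith [e2]
  -- p is on the frontier
  have hpfr : p ∈ frontier K := by
    rw [hKclosed.frontier_eq]
    refine ⟨hpK, ?_⟩
    intro hpint
    obtain ⟨ε, hε, hball⟩ := Metric.isOpen_iff.mp isOpen_interior p hpint
    obtain ⟨d, hddef⟩ : ∃ d : ℝ × ℝ, d = c • ((u.2, -u.1) : ℝ × ℝ) := ⟨_, rfl⟩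
    have hc0 : c ≠ 0 := by
      intro h; rw [h] at hcabs; simp at hcabs
    have hd0 : d ≠ 0 := by
      rw [hddef, smul_ne_zero_iff]
      refine ⟨hc0, ?_⟩
      intro h
      apply hu
      rw [Prod.ext_iff] at h
      simp only [Prod.fst_zero, Prod.snd_zero] at h
      have h2 : u.1 = 0 := by have := h.2; simpa using this
      exact Prod.ext h2 h.1
    have hdn : 0 < ‖d‖ := norm_pos_iff.mpr hd0
    obtain ⟨t, htdef⟩ : ∃ t : ℝ, t = ε / (2 * ‖d‖) := ⟨_, rfl⟩
    have ht : 0 < t := by rw [htdef]; positivity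
    have hq : p + t • d ∈ K := by
      apply interior_subset
      apply hball
      rw [Metric.mem_ball, dist_eq_norm]
      have he : p + t • d - p = t • d := by abel
      have hdne : ‖d‖ ≠ 0 := ne_of_gt hdn
      have hnorm : ‖t • d‖ = ε / 2 := by
        rw [norm_smul, Real.norm_eq_abs, abs_of_pos ht, htdef]
        field_simp
      rw [he, hnorm]
      linarith
    have hfq : c * det2 (p + t • d) u = c * det2 p u + t * (u.1 ^ 2 + u.2 ^ 2) := by
      unfold det2
      rw [hddef]
      simp only [Prod.fst_add, Prod.snd_add, Prod.smul_fst, Prod.smul_snd, smul_eq_mul]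
      linear_combination (t * (u.1 ^ 2 + u.2 ^ 2)) * hc2
    have hmax := hpmax hq
    simp only [Set.mem_setOf_eq] at hmax
    have husq : 0 < u.1 ^ 2 + u.2 ^ 2 := by
      by_contra hle
      push_neg at hle
      have h1 : u.1 = 0 := by nlinarith [sq_nonneg u.1, sq_nonneg u.2]
      have h2 : u.2 = 0 := by nlinarith [sq_nonneg u.1, sq_nonneg u.2]
      exact hu (Prod.ext h1 h2)
    nlinarith [hfq, hmax]
  refine ⟨p, ⟨hpfr, hp_cone⟩, ?_⟩
  -- final bound
  intro x hx
  have hx' : -x ∈ K := by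
    rw [hKsymm]
    simpa using hx
  have h1 : c * det2 x u ≤ c * det2 p u := hpmax hx
  have h2 : c * det2 (-x) u ≤ c * det2 p u := hpmax hx'
  have hneg : det2 (-x) u = -det2 x u := by unfold det2; simp; ring
  rw [hneg] at h2
  have habs : |c * det2 x u| ≤ c * det2 p u := abs_le.mpr ⟨by linarith, h1⟩
  calc |det2 x u| = |c * det2 x u| := by rw [abs_mul, hcabs, one_mul]
    _ ≤ c * det2 p u := habs
    _ ≤ |c * det2 p u| := le_abs_self _
    _ = |det2 p u| := by rw [abs_mul, hcabs, one_mul]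
end

section
/- Let v, w ∈ ℝ² be linearly independent with det(v, w) = 1, and let Γ ⊆ ℝ² be a nonempty compact set with v, w ∈ Γ and Γ ⊆ conv{0, v, w, v + w}. For λ ∈ [0,1] set z_λ := (1−λ)·w − λ·v, s(λ) := sup_{x ∈ Γ} |det(x, z_λ)|, and γ₂(λ) := s(λ)⁻¹ · z_λ. Then γ₂(0) = w, γ₂(1) = −v, and γ₂(λ) ∈ conv{−v, w, w − v} for every λ ∈ [0,1]. -/
lemma det2_smul_add (a b : ℝ) (x y u : ℝ × ℝ) :
    det2 (a • x + b • y) u = a * det2 x u + b * det2 y u := by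
  simp only [det2, Prod.smul_fst, Prod.smul_snd, Prod.fst_add, Prod.snd_add, smul_eq_mul]
  ring

lemma convex_det2_le (u : ℝ × ℝ) (c : ℝ) : Convex ℝ {x : ℝ × ℝ | |det2 x u| ≤ c} := by
  intro x hx y hy a b ha hb hab
  simp only [Set.mem_setOf_eq] at *
  rw [det2_smul_add]
  calc |a * det2 x u + b * det2 y u| ≤ |a * det2 x u| + |b * det2 y u| := abs_add_le _ _
    _ = a * |det2 x u| + b * |det2 y u| := by
        rw [abs_mul, abs_mul, abs_of_nonneg ha, abs_of_nonneg hb]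
    _ ≤ a * c + b * c :=
        add_le_add (mul_le_mul_of_nonneg_left hx ha) (mul_le_mul_of_nonneg_left hy hb)
    _ = c := by rw [← add_mul, hab, one_mul]

/-- Properties of the constructed curve `γ₂`: it joins `w` to `−v` and lies in
the triangle `conv{−v, w, w − v}`. -/
theorem stmt_5 (v w : ℝ × ℝ) (hind : LinearIndependent ℝ ![v, w])
    (hdet : det2 v w = 1)
    (Γ : Set (ℝ × ℝ)) (hΓne : Γ.Nonempty) (hΓc : IsCompact Γ)
    (hvΓ : v ∈ Γ) (hwΓ : w ∈ Γ)
    (hΓsub : Γ ⊆ convexHull ℝ {0, v, w, v + w})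
    (z : ℝ → ℝ × ℝ) (hz : ∀ l : ℝ, z l = (1 - l) • w - l • v)
    (s : ℝ → ℝ) (hs : ∀ l : ℝ, s l = sSup ((fun x => |det2 x (z l)|) '' Γ))
    (γ₂ : ℝ → ℝ × ℝ) (hγ₂ : ∀ l : ℝ, γ₂ l = (s l)⁻¹ • z l) :
    γ₂ 0 = w ∧ γ₂ 1 = -v ∧
      ∀ l ∈ Set.Icc (0 : ℝ) 1, γ₂ l ∈ convexHull ℝ {-v, w, w - v} := by
  -- determinant computations
  have hdetx : ∀ (l : ℝ) (x : ℝ × ℝ), det2 x (z l) = (1 - l) * det2 x w + l * det2 v x := by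
    intro l x
    rw [hz]
    simp [det2, Prod.smul_fst, Prod.smul_snd, smul_eq_mul]
    ring
  have hdv : ∀ l : ℝ, det2 v (z l) = 1 - l := by
    intro l; rw [hdetx]
    simp only [det2] at *
    linear_combination (1 - l) * hdet
  have hdw : ∀ l : ℝ, det2 w (z l) = l := by
    intro l; rw [hdetx]
    simp only [det2] at *
    linear_combination l * hdet
  have hdvw : ∀ l : ℝ, det2 (v + w) (z l) = 1 := by
    intro l; rw [hdetx]
    simp only [det2, Prod.fst_add, Prod.snd_add] at *
    linear_combination hdet
  have hd0 : ∀ l : ℝ, det2 0 (z l) = 0 := by intro l; simp [det2]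
  -- bound on Γ
  have hbound : ∀ l ∈ Set.Icc (0:ℝ) 1, ∀ x ∈ Γ, |det2 x (z l)| ≤ 1 := by
    rintro l ⟨hl0, hl1⟩ x hx
    have hsub : convexHull ℝ {(0:ℝ×ℝ), v, w, v + w} ⊆ {x : ℝ × ℝ | |det2 x (z l)| ≤ 1} := by
      apply convexHull_min _ (convex_det2_le _ _)
      rintro y hy
      simp only [Set.mem_insert_iff, Set.mem_singleton_iff] at hy
      rcases hy with rfl | rfl | rfl | rfl
      · simp only [Set.mem_setOf_eq, hd0, abs_zero]; linarith
      · simp only [Set.mem_setOf_eq, hdv]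
        rw [abs_of_nonneg (by linarith)]; linarith
      · simp only [Set.mem_setOf_eq, hdw]
        rw [abs_of_nonneg (by linarith)]; linarith
      · simp only [Set.mem_setOf_eq, hdvw, abs_one]
        exact le_rfl
    exact hsub (hΓsub hx)
  have hbdd : ∀ l ∈ Set.Icc (0:ℝ) 1, BddAbove ((fun x => |det2 x (z l)|) '' Γ) := by
    intro l hl
    exact ⟨1, by rintro _ ⟨x, hx, rfl⟩; exact hbound l hl x hx⟩
  have hsle1 : ∀ l ∈ Set.Icc (0:ℝ) 1, s l ≤ 1 := by
    intro l hl
    rw [hs]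
    apply Real.sSup_le
    · rintro _ ⟨x, hx, rfl⟩; exact hbound l hl x hx
    · linarith
  have hsge : ∀ l ∈ Set.Icc (0:ℝ) 1, 1 - l ≤ s l ∧ l ≤ s l := by
    rintro l hl
    constructor
    · rw [hs]
      have h := le_csSup (hbdd l hl) (Set.mem_image_of_mem _ hvΓ)
      rwa [hdv, abs_of_nonneg (by linarith [hl.2])] at h
    · rw [hs]
      have h := le_csSup (hbdd l hl) (Set.mem_image_of_mem _ hwΓ)
      rwa [hdw, abs_of_nonneg hl.1] at h
  have hmem01 : (0:ℝ) ∈ Set.Icc (0:ℝ) 1 := by constructor <;> norm_num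
  have hmem11 : (1:ℝ) ∈ Set.Icc (0:ℝ) 1 := by constructor <;> norm_num
  have hs0 : s 0 = 1 := le_antisymm (hsle1 0 hmem01) (by simpa using (hsge 0 hmem01).1)
  have hs1 : s 1 = 1 := le_antisymm (hsle1 1 hmem11) ((hsge 1 hmem11).2)
  refine ⟨?_, ?_, ?_⟩
  · rw [hγ₂, hs0, hz]; simp
  · rw [hγ₂, hs1, hz]; simp
  · intro l hl
    have hspos : 0 < s l := by
      rcases le_or_gt l (1/2) with h | h
      · linarith [(hsge l hl).1]
      · linarith [(hsge l hl).2]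
    set t := (s l)⁻¹ with ht
    have ht1 : 1 ≤ t := by
      rw [ht, le_inv_comm₀ one_pos hspos]
      simpa using hsle1 l hl
    have htl : t * l ≤ 1 := by
      rw [ht, inv_mul_le_iff₀ hspos, mul_one]
      exact (hsge l hl).2
    have htl' : t * (1 - l) ≤ 1 := by
      rw [ht, inv_mul_le_iff₀ hspos, mul_one]
      exact (hsge l hl).1
    have key : γ₂ l = (1 - t * (1 - l)) • (-v) + (1 - t * l) • w + (t - 1) • (w - v) := by
      rw [hγ₂, hz, ← ht]
      ext <;> simp [Prod.smul_fst, Prod.smul_snd, smul_eq_mul] <;> ring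
    rw [key]
    have hconv : Convex ℝ (convexHull ℝ {-v, w, w - v}) := convex_convexHull ℝ _
    have hmem : ∀ i : Fin 3, (![-v, w, w - v] : Fin 3 → ℝ × ℝ) i ∈ convexHull ℝ {-v, w, w - v} := by
      intro i
      fin_cases i <;> exact subset_convexHull ℝ _ (by simp)
    have h0 : ∀ i ∈ Finset.univ, (0:ℝ) ≤ (![1 - t * (1 - l), 1 - t * l, t - 1] : Fin 3 → ℝ) i := by
      intro i _
      fin_cases i <;> simp <;> linarith
    have h1sum : ∑ i ∈ Finset.univ, (![1 - t * (1 - l), 1 - t * l, t - 1] : Fin 3 → ℝ) i = 1 := by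
      simp [Fin.sum_univ_three]; ring
    have := hconv.sum_mem h0 h1sum (fun i _ => hmem i)
    simpa [Fin.sum_univ_three] using this
end

section
/- Let v, w ∈ ℝ² be linearly independent with det(v, w) = 1, and let Γ ⊆ ℝ² be a nonempty compact set with v, w ∈ Γ and Γ ⊆ conv{0, v, w, v + w}. For λ ∈ [0,1] set z_λ := (1−λ)·w − λ·v and s(λ) := sup_{x ∈ Γ} |det(x, z_λ)|. Then the set K₂ := {α · z_λ : λ ∈ [0,1], 0 ≤ α ≤ 1/s(λ)} is convex. -/
theorem le_inv_sSup_iff {S : Set ℝ} (hS : BddAbove S) (hpos : 0 < sSup S) {α : ℝ}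
    (hα : 0 ≤ α) : α ≤ (sSup S)⁻¹ ↔ ∀ t ∈ S, α * t ≤ 1 := by
  rcases hα.eq_or_lt with rfl | hα
  · simp [hpos.le]
  have hne : S.Nonempty := Set.nonempty_iff_ne_empty.2 fun h => by simp [h] at hpos
  rw [le_inv_comm₀ hα hpos, csSup_le_iff hS hne]
  exact forall₂_congr fun t _ => by rw [inv_eq_one_div, le_div_iff₀' hα]

theorem det2_swap (x y : ℝ × ℝ) : det2 y x = -det2 x y := by
  simp only [det2]; ring

@[simp] theorem det2_self (x : ℝ × ℝ) : det2 x x = 0 := by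
  simp only [det2]; ring

@[simp] theorem det2_zero_left (y : ℝ × ℝ) : det2 0 y = 0 := by
  simp [det2]

@[simp] theorem det2_zero_right (x : ℝ × ℝ) : det2 x 0 = 0 := by
  simp [det2]

theorem isLinearMap_det2_right (x : ℝ × ℝ) : IsLinearMap ℝ (det2 x) :=
  ⟨fun y y' => by simp only [det2, Prod.fst_add, Prod.snd_add]; ring,
   fun c y => by simp only [det2, Prod.smul_fst, Prod.smul_snd, smul_eq_mul]; ring⟩

theorem isLinearMap_det2_left (y : ℝ × ℝ) : IsLinearMap ℝ (det2 · y) :=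
  ⟨fun x x' => by simp only [det2, Prod.fst_add, Prod.snd_add]; ring,
   fun c x => by simp only [det2, Prod.smul_fst, Prod.smul_snd, smul_eq_mul]; ring⟩

theorem det2_add_left (x x' y : ℝ × ℝ) : det2 (x + x') y = det2 x y + det2 x' y :=
  (isLinearMap_det2_left y).map_add x x'

theorem det2_add_right (x y y' : ℝ × ℝ) : det2 x (y + y') = det2 x y + det2 x y' :=
  (isLinearMap_det2_right x).map_add y y'

theorem det2_smul_right (c : ℝ) (x y : ℝ × ℝ) : det2 x (c • y) = c * det2 x y :=
  (isLinearMap_det2_right x).map_smul c y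

/-- Cramer's rule. -/
theorem det2_smul_eq_add (v w p : ℝ × ℝ) : det2 v w • p = det2 p w • v + det2 v p • w := by
  ext <;> simp only [det2, Prod.smul_fst, Prod.smul_snd, Prod.fst_add, Prod.snd_add,
    smul_eq_mul] <;> ring

/-- The paper's `z_λ`; for `λ ∈ [0,1]` it runs along the segment from `w` to `-v`. -/
def coneDir (v w : ℝ × ℝ) (l : ℝ) : ℝ × ℝ := (1 - l) • w - l • v

section Cone

variable {v w : ℝ × ℝ}

theorem det2_coneDir (x : ℝ × ℝ) (l : ℝ) :
    det2 x (coneDir v w l) = (1 - l) * det2 x w + l * det2 v x := by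
  simp only [coneDir, det2, Prod.fst_sub, Prod.snd_sub, Prod.smul_fst, Prod.smul_snd, smul_eq_mul]
  ring

theorem det2_coneDir_mem_Icc {x : ℝ × ℝ} {l : ℝ} (hl : l ∈ Set.Icc 0 1) (hd : 0 ≤ det2 v w)
    (hx : x ∈ convexHull ℝ {0, v, w, v + w}) :
    det2 x (coneDir v w l) ∈ Set.Icc 0 (det2 v w) := by
  refine convexHull_min ?_ ((convex_Icc _ _).is_linear_preimage (isLinearMap_det2_left _)) hx
  obtain ⟨hl₀, hl₁⟩ := hl
  rintro y (hy | hy | hy | hy) <;> subst y <;>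
    simp only [Set.mem_preimage, Set.mem_Icc, det2_coneDir, det2_add_left, det2_add_right,
      det2_self, det2_zero_left, det2_zero_right] <;>
    constructor <;> nlinarith

theorem exists_smul_coneDir_iff (hd : 0 < det2 v w) (p : ℝ × ℝ) :
    (∃ l ∈ Set.Icc (0 : ℝ) 1, ∃ α : ℝ, 0 ≤ α ∧ p = α • coneDir v w l) ↔
      det2 p w ≤ 0 ∧ 0 ≤ det2 v p := by
  constructor
  · rintro ⟨l, ⟨hl₀, hl₁⟩, α, hα, rfl⟩
    rw [det2_swap, det2_smul_right, det2_smul_right, det2_coneDir, det2_coneDir]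
    simp only [det2_self, mul_zero, add_zero, zero_add, neg_nonpos]
    exact ⟨mul_nonneg hα (mul_nonneg hl₀ hd.le),
      mul_nonneg hα (mul_nonneg (sub_nonneg.2 hl₁) hd.le)⟩
  · rintro ⟨ha, hb⟩
    set a := det2 p w
    set b := det2 v p
    have hp : p = (det2 v w)⁻¹ • (a • v + b • w) := by
      rw [← det2_smul_eq_add, inv_smul_smul₀ hd.ne']
    rcases (by linarith : 0 ≤ b - a).eq_or_lt with hab | hab
    · refine ⟨0, ⟨le_rfl, zero_le_one⟩, 0, le_rfl, ?_⟩
      rw [hp, show a = 0 by linarith, show b = 0 by linarith]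
      simp
    · refine ⟨-a / (b - a), ⟨?_, ?_⟩, (b - a) / det2 v w, by positivity, ?_⟩
      · exact div_nonneg (by linarith) hab.le
      · rw [div_le_one hab]; linarith
      · rw [hp, coneDir]
        ext <;> simp only [Prod.smul_fst, Prod.smul_snd, Prod.fst_add, Prod.snd_add,
          Prod.fst_sub, Prod.snd_sub, smul_eq_mul] <;> field_simp <;> ring

variable {Γ : Set (ℝ × ℝ)}

theorem le_inv_sSup_abs_det2_coneDir_iff (hd : 0 < det2 v w) (hvΓ : v ∈ Γ) (hwΓ : w ∈ Γ)
    (hΓ : Γ ⊆ convexHull ℝ {0, v, w, v + w}) {l α : ℝ} (hl : l ∈ Set.Icc 0 1) (hα : 0 ≤ α) :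
    α ≤ (sSup ((fun x => |det2 x (coneDir v w l)|) '' Γ))⁻¹ ↔
      ∀ x ∈ Γ, det2 x (α • coneDir v w l) ≤ 1 := by
  have hmem : ∀ x ∈ Γ, det2 x (coneDir v w l) ∈ Set.Icc 0 (det2 v w) :=
    fun x hx => det2_coneDir_mem_Icc hl hd.le (hΓ hx)
  have hbdd : BddAbove ((fun x => |det2 x (coneDir v w l)|) '' Γ) := by
    refine ⟨det2 v w, ?_⟩
    rintro _ ⟨x, hx, rfl⟩
    exact (abs_of_nonneg (hmem x hx).1).trans_le (hmem x hx).2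
  have hpos : 0 < sSup ((fun x => |det2 x (coneDir v w l)|) '' Γ) := by
    have hv : (1 - l) * det2 v w ≤ _ := le_csSup_of_le hbdd ⟨v, hvΓ, rfl⟩
      (by simpa [det2_coneDir] using le_abs_self ((1 - l) * det2 v w))
    have hw : l * det2 v w ≤ _ := le_csSup_of_le hbdd ⟨w, hwΓ, rfl⟩
      (by simpa [det2_coneDir, det2_swap v w] using le_abs_self (l * det2 v w))
    linarith
  rw [le_inv_sSup_iff hbdd hpos hα, Set.forall_mem_image]
  exact forall₂_congr fun x hx => by rw [abs_of_nonneg (hmem x hx).1, det2_smul_right]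

theorem setOf_smul_coneDir_le_inv_sSup_eq (hd : 0 < det2 v w) (hvΓ : v ∈ Γ) (hwΓ : w ∈ Γ)
    (hΓ : Γ ⊆ convexHull ℝ {0, v, w, v + w}) :
    {p | ∃ l ∈ Set.Icc (0 : ℝ) 1, ∃ α : ℝ, 0 ≤ α ∧
        α ≤ (sSup ((fun x => |det2 x (coneDir v w l)|) '' Γ))⁻¹ ∧ p = α • coneDir v w l} =
      {p | (det2 p w ≤ 0 ∧ 0 ≤ det2 v p) ∧ ∀ x ∈ Γ, det2 x p ≤ 1} := by
  ext p
  simp only [Set.mem_ofPred_eq, ← exists_smul_coneDir_iff hd]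
  constructor
  · rintro ⟨l, hl, α, hα, hαs, rfl⟩
    exact ⟨⟨l, hl, α, hα, rfl⟩, (le_inv_sSup_abs_det2_coneDir_iff hd hvΓ hwΓ hΓ hl hα).1 hαs⟩
  · rintro ⟨⟨l, hl, α, hα, rfl⟩, hΓp⟩
    exact ⟨l, hl, α, hα, (le_inv_sSup_abs_det2_coneDir_iff hd hvΓ hwΓ hΓ hl hα).2 hΓp, rfl⟩

end Cone

theorem convex_setOf_det2 (v w : ℝ × ℝ) (Γ : Set (ℝ × ℝ)) :
    Convex ℝ {p | (det2 p w ≤ 0 ∧ 0 ≤ det2 v p) ∧ ∀ x ∈ Γ, det2 x p ≤ 1} := by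
  have h : {p | (det2 p w ≤ 0 ∧ 0 ≤ det2 v p) ∧ ∀ x ∈ Γ, det2 x p ≤ 1} =
      ({p | det2 p w ≤ 0} ∩ {p | 0 ≤ det2 v p}) ∩ ⋂ x ∈ Γ, {p | det2 x p ≤ 1} := by
    ext p; simp
  rw [h]
  exact ((convex_halfSpace_le (isLinearMap_det2_left w) 0).inter
    (convex_halfSpace_ge (isLinearMap_det2_right v) 0)).inter
    (convex_iInter₂ fun x _ => convex_halfSpace_le (isLinearMap_det2_right x) 1)

theorem stmt_6_general (v w : ℝ × ℝ)
    (hdet : det2 v w = 1)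
    (Γ : Set (ℝ × ℝ))
    (hvΓ : v ∈ Γ) (hwΓ : w ∈ Γ)
    (hΓsub : Γ ⊆ convexHull ℝ {0, v, w, v + w})
    (z : ℝ → ℝ × ℝ) (hz : ∀ l : ℝ, z l = (1 - l) • w - l • v)
    (s : ℝ → ℝ) (hs : ∀ l : ℝ, s l = sSup ((fun x => |det2 x (z l)|) '' Γ))
    (K₂ : Set (ℝ × ℝ))
    (hK₂ : K₂ = {p | ∃ l ∈ Set.Icc (0 : ℝ) 1, ∃ α : ℝ,
      0 ≤ α ∧ α ≤ (s l)⁻¹ ∧ p = α • z l}) :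
    Convex ℝ K₂ := by
  obtain rfl : z = coneDir v w := funext hz
  obtain rfl : s = fun l => sSup ((fun x => |det2 x (coneDir v w l)|) '' Γ) := funext hs
  rw [hK₂, setOf_smul_coneDir_le_inv_sSup_eq (hdet ▸ one_pos) hvΓ hwΓ hΓsub]
  exact convex_setOf_det2 v w Γ

/-- The region `K₂` enclosed by the constructed arc `γ₂` together with the
segments from the origin to its endpoints is convex. -/
theorem stmt_6 (v w : ℝ × ℝ) (hind : LinearIndependent ℝ ![v, w])
    (hdet : det2 v w = 1)
    (Γ : Set (ℝ × ℝ)) (hΓne : Γ.Nonempty) (hΓc : IsCompact Γ)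
    (hvΓ : v ∈ Γ) (hwΓ : w ∈ Γ)
    (hΓsub : Γ ⊆ convexHull ℝ {0, v, w, v + w})
    (z : ℝ → ℝ × ℝ) (hz : ∀ l : ℝ, z l = (1 - l) • w - l • v)
    (s : ℝ → ℝ) (hs : ∀ l : ℝ, s l = sSup ((fun x => |det2 x (z l)|) '' Γ))
    (K₂ : Set (ℝ × ℝ))
    (hK₂ : K₂ = {p | ∃ l ∈ Set.Icc (0 : ℝ) 1, ∃ α : ℝ,
      0 ≤ α ∧ α ≤ (s l)⁻¹ ∧ p = α • z l}) :
    Convex ℝ K₂ :=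
  stmt_6_general v w hdet Γ hvΓ hwΓ hΓsub z hz s hs K₂ hK₂
end

section
/- Let v, w ∈ ℝ² be linearly independent with det(v, w) = 1, let K₁ ⊆ ℝ² be a compact convex set with 0, v, w ∈ K₁ and K₁ ⊆ conv{0, v, w, v + w}, and let K := K₁ ∪ K₂ ∪ (−K₁) ∪ (−K₂), where K₂ := {α · z_λ : λ ∈ [0,1], 0 ≤ α ≤ 1/s(λ)}, z_λ := (1−λ)·w − λ·v, and s(λ) := sup_{x ∈ K₁} |det(x, z_λ)|. Set Q₁ := {a·v + b·w : a, b ≥ 0} and Q₂ := {a·(−v) + b·w : a, b ≥ 0}. Then v and w are conjugate directions of K, i.e., |det(x, v)| ≤ 1 and |det(x, w)| ≤ 1 for all x ∈ K; consequently, for every nonzero u ∈ Q₂ there exists p ∈ ∂K ∩ Q₁ with |det(x, u)| ≤ |det(p, u)| for all x ∈ K, and every nonzero direction u of a supporting line of K at a point p ∈ ∂K ∩ Q₁ \ {v, w} lies in Q₂ ∪ (−Q₂). -/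
set_option maxHeartbeats 1000000 in
/-- For the constructed Radon body `K = K₁ ∪ K₂ ∪ (−K₁) ∪ (−K₂)`, the vectors
`v` and `w` are conjugate directions; consequently every second-quadrant
direction supports `K` at a point of the first-quadrant arc, and every
supporting direction at a first-quadrant boundary point (other than `v, w`)
lies in the second quadrant. -/
theorem stmt_8 (v w : ℝ × ℝ) (hind : LinearIndependent ℝ ![v, w])
    (hdet : det2 v w = 1)
    (K₁ : Set (ℝ × ℝ)) (hK₁c : IsCompact K₁) (hK₁conv : Convex ℝ K₁)
    (h0 : (0 : ℝ × ℝ) ∈ K₁) (hvK : v ∈ K₁) (hwK : w ∈ K₁)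
    (hK₁sub : K₁ ⊆ convexHull ℝ {0, v, w, v + w})
    (z : ℝ → ℝ × ℝ) (hz : ∀ l : ℝ, z l = (1 - l) • w - l • v)
    (s : ℝ → ℝ) (hs : ∀ l : ℝ, s l = sSup ((fun x => |det2 x (z l)|) '' K₁))
    (K₂ : Set (ℝ × ℝ))
    (hK₂ : K₂ = {p | ∃ l ∈ Set.Icc (0 : ℝ) 1, ∃ α : ℝ,
      0 ≤ α ∧ α ≤ (s l)⁻¹ ∧ p = α • z l})
    (K : Set (ℝ × ℝ)) (hK : K = K₁ ∪ K₂ ∪ (-K₁) ∪ (-K₂))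
    (Q₁ Q₂ : Set (ℝ × ℝ))
    (hQ₁ : Q₁ = {p | ∃ a b : ℝ, 0 ≤ a ∧ 0 ≤ b ∧ p = a • v + b • w})
    (hQ₂ : Q₂ = {p | ∃ a b : ℝ, 0 ≤ a ∧ 0 ≤ b ∧ p = a • (-v) + b • w}) :
    (∀ x ∈ K, |det2 x v| ≤ 1 ∧ |det2 x w| ≤ 1) ∧
    (∀ u ∈ Q₂, u ≠ 0 → ∃ p ∈ frontier K ∩ Q₁, ∀ x ∈ K, |det2 x u| ≤ |det2 p u|) ∧
    (∀ p ∈ frontier K ∩ Q₁, p ≠ v → p ≠ w → ∀ u : ℝ × ℝ, u ≠ 0 →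
      ((∀ x ∈ K, det2 x u ≤ det2 p u) ∨ (∀ x ∈ K, det2 p u ≤ det2 x u)) →
      u ∈ Q₂ ∪ -Q₂) := by
  clear hind
  have hdet' : v.1 * w.2 - v.2 * w.1 = 1 := hdet
  -- bilinearity / coordinate lemmas
  have dd : ∀ a b c d : ℝ, det2 (a • v + b • w) (c • v + d • w) = a * d - b * c := by
    intro a b c d
    simp only [det2, Prod.fst_add, Prod.snd_add, Prod.smul_fst, Prod.smul_snd, smul_eq_mul]
    linear_combination (a * d - b * c) * hdet'
  have dw : ∀ a b : ℝ, det2 (a • v + b • w) w = a := by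
    intro a b
    simp only [det2, Prod.fst_add, Prod.snd_add, Prod.smul_fst, Prod.smul_snd, smul_eq_mul]
    linear_combination a * hdet'
  have dv : ∀ a b : ℝ, det2 v (a • v + b • w) = b := by
    intro a b
    simp only [det2, Prod.fst_add, Prod.snd_add, Prod.smul_fst, Prod.smul_snd, smul_eq_mul]
    linear_combination b * hdet'
  have dw2 : ∀ a b : ℝ, det2 w (a • v + b • w) = -a := by
    intro a b
    simp only [det2, Prod.fst_add, Prod.snd_add, Prod.smul_fst, Prod.smul_snd, smul_eq_mul]
    linear_combination (-a) * hdet'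
  have repr : ∀ x : ℝ × ℝ, x = det2 x w • v + det2 v x • w := by
    intro x
    have h1 : x.1 = (det2 x w • v + det2 v x • w).1 := by
      simp only [det2, Prod.fst_add, Prod.smul_fst, smul_eq_mul]
      linear_combination -x.1 * hdet'
    have h2 : x.2 = (det2 x w • v + det2 v x • w).2 := by
      simp only [det2, Prod.snd_add, Prod.smul_snd, smul_eq_mul]
      linear_combination -x.2 * hdet'
    exact Prod.ext h1 h2
  have dneg : ∀ x y : ℝ × ℝ, det2 (-x) y = -det2 x y := by
    intro x y; simp only [det2, Prod.fst_neg, Prod.snd_neg]; ring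
  have dnegr : ∀ x y : ℝ × ℝ, det2 x (-y) = -det2 x y := by
    intro x y; simp only [det2, Prod.fst_neg, Prod.snd_neg]; ring
  have dsmull : ∀ (r : ℝ) (x y : ℝ × ℝ), det2 (r • x) y = r * det2 x y := by
    intro r x y; simp only [det2, Prod.smul_fst, Prod.smul_snd, smul_eq_mul]; ring
  have dsmulr : ∀ (r : ℝ) (x y : ℝ × ℝ), det2 x (r • y) = r * det2 x y := by
    intro r x y; simp only [det2, Prod.smul_fst, Prod.smul_snd, smul_eq_mul]; ring
  have dadd : ∀ x x' y : ℝ × ℝ, det2 (x + x') y = det2 x y + det2 x' y := by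
    intro x x' y; simp only [det2, Prod.fst_add, Prod.snd_add]; ring
  have dsub : ∀ x x' y : ℝ × ℝ, det2 (x - x') y = det2 x y - det2 x' y := by
    intro x x' y; simp only [det2, Prod.fst_sub, Prod.snd_sub]; ring
  have dxv : ∀ x : ℝ × ℝ, det2 x v = -det2 v x := by
    intro x; simp only [det2]; ring
  have hzc : ∀ l : ℝ, z l = (-l) • v + (1 - l) • w := by
    intro l; rw [hz]; module
  -- coordinates of points of K₁
  have hmem : ∀ x ∈ K₁, 0 ≤ det2 x w ∧ det2 x w ≤ 1 ∧ 0 ≤ det2 v x ∧ det2 v x ≤ 1 := by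
    have hconv : Convex ℝ {x : ℝ × ℝ |
        0 ≤ det2 x w ∧ det2 x w ≤ 1 ∧ 0 ≤ det2 v x ∧ det2 v x ≤ 1} := by
      intro x hx y hy t t' ht ht' htt
      have e1 : det2 (t • x + t' • y) w = t * det2 x w + t' * det2 y w := by
        rw [dadd, dsmull, dsmull]
      have e2 : det2 v (t • x + t' • y) = t * det2 v x + t' * det2 v y := by
        simp only [det2, Prod.fst_add, Prod.snd_add, Prod.smul_fst, Prod.smul_snd,
          smul_eq_mul]
        ring
      obtain ⟨h1, h2, h3, h4⟩ := hx
      obtain ⟨h5, h6, h7, h8⟩ := hy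
      refine ⟨?_, ?_, ?_, ?_⟩
      · rw [e1]; nlinarith
      · rw [e1]; nlinarith
      · rw [e2]; nlinarith
      · rw [e2]; nlinarith
    have hsubset : ({0, v, w, v + w} : Set (ℝ × ℝ)) ⊆ {x : ℝ × ℝ |
        0 ≤ det2 x w ∧ det2 x w ≤ 1 ∧ 0 ≤ det2 v x ∧ det2 v x ≤ 1} := by
      intro x hx
      simp only [Set.mem_insert_iff, Set.mem_singleton_iff] at hx
      rcases hx with rfl | rfl | rfl | rfl <;>
        refine ⟨?_, ?_, ?_, ?_⟩ <;>
        simp only [det2, Prod.fst_add, Prod.snd_add, Prod.fst_zero, Prod.snd_zero] <;>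
        nlinarith [hdet']
    intro x hx
    exact convexHull_min hsubset hconv (hK₁sub hx)
  -- facts about s
  have hdz : ∀ (x : ℝ × ℝ) (l : ℝ),
      det2 x (z l) = (1 - l) * det2 x w + l * det2 v x := by
    intro x l
    conv_lhs => rw [repr x]
    rw [hzc l, dd]; ring
  have hne : ∀ l : ℝ, ((fun x => |det2 x (z l)|) '' K₁).Nonempty :=
    fun l => ⟨_, Set.mem_image_of_mem _ h0⟩
  have hptb : ∀ (l : ℝ), ∀ x ∈ K₁, |det2 x (z l)| ≤ |1 - l| + |l| := by
    intro l x hx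
    obtain ⟨hA0, hA1, hB0, hB1⟩ := hmem x hx
    rw [hdz]
    refine (abs_add_le _ _).trans ?_
    rw [abs_mul, abs_mul, abs_of_nonneg hA0, abs_of_nonneg hB0]
    nlinarith [abs_nonneg (1 - l), abs_nonneg l]
  have hbdd : ∀ l : ℝ, BddAbove ((fun x => |det2 x (z l)|) '' K₁) := by
    intro l
    refine ⟨|1 - l| + |l|, ?_⟩
    rintro y ⟨x, hx, rfl⟩
    exact hptb l x hx
  have hsge : ∀ (l : ℝ), ∀ x ∈ K₁, |det2 x (z l)| ≤ s l := by
    intro l x hx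
    rw [hs]
    exact le_csSup (hbdd l) ⟨x, hx, rfl⟩
  have hsgel : ∀ l : ℝ, l ≤ s l := by
    intro l
    have h1 : det2 w (z l) = l := by
      rw [hdz]
      have : det2 w w = 0 := by simp [det2]; ring
      rw [this, hdet]; ring
    have := hsge l w hwK
    rw [h1] at this
    exact (le_abs_self l).trans this
  have hsge1l : ∀ l : ℝ, 1 - l ≤ s l := by
    intro l
    have h1 : det2 v (z l) = 1 - l := by
      rw [hdz]
      have hvv : det2 v v = 0 := by simp [det2]; ring
      have hvw : det2 v w = 1 := hdet
      have hxw : det2 v w = 1 := hdet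
      rw [hxw]
      have : det2 v v = 0 := hvv
      rw [this]; ring
    have := hsge l v hvK
    rw [h1] at this
    exact (le_abs_self _).trans this
  have hspos : ∀ l : ℝ, 0 < s l := by
    intro l
    have := hsgel l; have := hsge1l l; linarith
  have hdznn : ∀ l : ℝ, 0 ≤ l → l ≤ 1 → ∀ x ∈ K₁, 0 ≤ det2 x (z l) := by
    intro l hl0 hl1 x hx
    obtain ⟨hA0, hA1, hB0, hB1⟩ := hmem x hx
    rw [hdz]
    nlinarith
  -- unpacking K₂
  have hK₂elt : ∀ x ∈ K₂, ∃ l, 0 ≤ l ∧ l ≤ 1 ∧ ∃ α, 0 ≤ α ∧ α * s l ≤ 1 ∧ x = α • z l := by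
    intro x hx
    rw [hK₂] at hx
    obtain ⟨l, ⟨hl0, hl1⟩, α, hα0, hαi, hxe⟩ := hx
    refine ⟨l, hl0, hl1, α, hα0, ?_, hxe⟩
    have h := mul_le_mul_of_nonneg_right hαi (hspos l).le
    rwa [inv_mul_cancel₀ (hspos l).ne'] at h
  have hK₂mk : ∀ (l α : ℝ), 0 ≤ l → l ≤ 1 → 0 ≤ α → α * s l ≤ 1 → α • z l ∈ K₂ := by
    intro l α hl0 hl1 hα0 hα1
    rw [hK₂]
    refine ⟨l, ⟨hl0, hl1⟩, α, hα0, ?_, rfl⟩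
    have h := mul_le_mul_of_nonneg_right hα1 (inv_nonneg.mpr (hspos l).le)
    rwa [mul_assoc, mul_inv_cancel₀ (hspos l).ne', mul_one, one_mul] at h
  -- the bound |det2 x (z l)| ≤ s l for all x ∈ K
  have hKbound : ∀ l : ℝ, 0 ≤ l → l ≤ 1 → ∀ x ∈ K, |det2 x (z l)| ≤ s l := by
    intro l hl0 hl1
    have hK₂b : ∀ x ∈ K₂, |det2 x (z l)| ≤ s l := by
      intro x hx
      obtain ⟨μ, hμ0, hμ1, α, hα0, hαs, rfl⟩ := hK₂elt x hx
      have dzz : det2 (z μ) (z l) = l - μ := by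
        rw [hzc μ, hzc l, dd]; ring
      rw [dsmull, abs_mul, abs_of_nonneg hα0, dzz]
      have habs : |l - μ| ≤ s l * s μ := by
        rw [abs_sub_le_iff]
        constructor
        · have h1 : l * (1 - μ) ≤ s l * s μ :=
            mul_le_mul (hsgel l) (hsge1l μ) (by linarith) (hspos l).le
          nlinarith [mul_nonneg hμ0 (by linarith : (0:ℝ) ≤ 1 - l)]
        · have h1 : (1 - l) * μ ≤ s l * s μ :=
            mul_le_mul (hsge1l l) (hsgel μ) hμ0 (hspos l).le
          nlinarith [mul_nonneg hl0 (by linarith : (0:ℝ) ≤ 1 - μ)]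
      nlinarith [mul_le_mul_of_nonneg_left habs hα0,
        mul_le_mul_of_nonneg_left hαs (hspos l).le]
    intro x hx
    rw [hK] at hx
    rcases hx with ((hx | hx) | hx) | hx
    · exact hsge l x hx
    · exact hK₂b x hx
    · have h := hsge l (-x) (Set.mem_neg.mp hx)
      rwa [dneg, abs_neg] at h
    · have h := hK₂b (-x) (Set.mem_neg.mp hx)
      rwa [dneg, abs_neg] at h
  -- Part 1
  have part1 : ∀ x ∈ K, |det2 x v| ≤ 1 ∧ |det2 x w| ≤ 1 := by
    have bound1 : ∀ x, (x ∈ K₁ ∨ x ∈ K₂) → |det2 x v| ≤ 1 ∧ |det2 x w| ≤ 1 := by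
      rintro x (hx | hx)
      · obtain ⟨hA0, hA1, hB0, hB1⟩ := hmem x hx
        constructor
        · rw [dxv x, abs_neg, abs_of_nonneg hB0]; exact hB1
        · rw [abs_of_nonneg hA0]; exact hA1
      · obtain ⟨l, hl0, hl1, α, hα0, hαs, rfl⟩ := hK₂elt x hx
        have h1 : det2 (z l) v = -(1 - l) := by rw [hzc l]; rw [dxv, dv]
        have h2 : det2 (z l) w = -l := by rw [hzc l, dw]
        constructor
        · rw [dsmull, h1, abs_mul, abs_of_nonneg hα0, abs_neg,
            abs_of_nonneg (by linarith : (0:ℝ) ≤ 1 - l)]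
          nlinarith [hsge1l l]
        · rw [dsmull, h2, abs_mul, abs_of_nonneg hα0, abs_neg,
            abs_of_nonneg hl0]
          nlinarith [hsgel l]
    intro x hx
    rw [hK] at hx
    rcases hx with ((hx | hx) | hx) | hx
    · exact bound1 x (Or.inl hx)
    · exact bound1 x (Or.inr hx)
    · have h := bound1 (-x) (Or.inl (Set.mem_neg.mp hx))
      rwa [dneg, dneg, abs_neg, abs_neg] at h
    · have h := bound1 (-x) (Or.inr (Set.mem_neg.mp hx))
      rwa [dneg, dneg, abs_neg, abs_neg] at h
  -- closedness of K
  have hlip : ∀ l l' : ℝ, s l ≤ s l' + |l - l'| := by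
    intro l l'
    rw [hs]
    apply csSup_le (hne l)
    rintro y ⟨x, hx, rfl⟩
    obtain ⟨hA0, hA1, hB0, hB1⟩ := hmem x hx
    have e : (1 - l) * det2 x w + l * det2 v x =
        ((1 - l') * det2 x w + l' * det2 v x) + (l - l') * (det2 v x - det2 x w) := by
      ring
    have h1 : |(1 - l') * det2 x w + l' * det2 v x| ≤ s l' := by
      rw [← hdz]; exact hsge l' x hx
    have h2 : |(l - l') * (det2 v x - det2 x w)| ≤ |l - l'| := by
      rw [abs_mul]
      have : |det2 v x - det2 x w| ≤ 1 := abs_le.mpr ⟨by linarith, by linarith⟩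
      exact mul_le_of_le_one_right (abs_nonneg _) this
    calc |det2 x (z l)| = |((1 - l') * det2 x w + l' * det2 v x) +
          (l - l') * (det2 v x - det2 x w)| := by rw [hdz, e]
      _ ≤ |(1 - l') * det2 x w + l' * det2 v x| +
          |(l - l') * (det2 v x - det2 x w)| := abs_add_le _ _
      _ ≤ s l' + |l - l'| := add_le_add h1 h2
  have hscont : Continuous s := by
    have : LipschitzWith 1 s := by
      apply LipschitzWith.of_dist_le_mul
      intro l l'
      rw [Real.dist_eq, Real.dist_eq, NNReal.coe_one, one_mul]
      have h1 := hlip l l'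
      have h2 := hlip l' l
      rw [abs_sub_comm l' l] at h2
      exact abs_sub_le_iff.mpr ⟨by linarith, by linarith⟩
    exact this.continuous
  have hK₂cpt : IsCompact K₂ := by
    have hDcpt : IsCompact ((Set.Icc (0:ℝ) 1 ×ˢ Set.Icc (0:ℝ) 2) ∩
        {p : ℝ × ℝ | p.2 * s p.1 ≤ 1}) := by
      apply (isCompact_Icc.prod isCompact_Icc).inter_right
      exact isClosed_le (continuous_snd.mul (hscont.comp continuous_fst)) continuous_const
    have himg : K₂ = (fun p : ℝ × ℝ => p.2 • ((1 - p.1) • w - p.1 • v)) ''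
        ((Set.Icc (0:ℝ) 1 ×ˢ Set.Icc (0:ℝ) 2) ∩ {p : ℝ × ℝ | p.2 * s p.1 ≤ 1}) := by
      ext x
      constructor
      · intro hx
        obtain ⟨l, hl0, hl1, α, hα0, hαs, rfl⟩ := hK₂elt x hx
        have hα2 : α ≤ 2 := by nlinarith [hsgel l, hsge1l l]
        exact ⟨(l, α), ⟨⟨⟨hl0, hl1⟩, ⟨hα0, hα2⟩⟩, hαs⟩, by rw [hz]⟩
      · rintro ⟨⟨l, α⟩, ⟨⟨⟨hl0, hl1⟩, hα0, hα2⟩, hα1⟩, rfl⟩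
        show α • ((1 - l) • w - l • v) ∈ K₂
        rw [← hz l]
        exact hK₂mk l α hl0 hl1 hα0 hα1
    rw [himg]
    apply hDcpt.image
    apply Continuous.smul continuous_snd
    exact ((continuous_const.sub continuous_fst).smul continuous_const).sub
      (continuous_fst.smul continuous_const)
  have hKclosed : IsClosed K := by
    rw [hK]
    exact ((hK₁c.isClosed.union hK₂cpt.isClosed).union hK₁c.isClosed.neg).union
      hK₂cpt.isClosed.neg
  refine ⟨part1, ?_, ?_⟩
  -- Part 2
  · rw [hQ₂]
    rintro u ⟨a, b, ha, hb, rfl⟩ hune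
    set U := a • (-v) + b • w with hU
    have ht : 0 < a + b := by
      rcases lt_or_eq_of_le (by linarith : (0:ℝ) ≤ a + b) with h | h
      · exact h
      · exfalso
        apply hune
        have ha0 : a = 0 := by linarith
        have hb0 : b = 0 := by linarith
        rw [hU, ha0, hb0]; simp
    set t := a + b with htdef
    set l := a / t with hldef
    have hl0 : 0 ≤ l := div_nonneg ha ht.le
    have hl1 : l ≤ 1 := by rw [hldef, div_le_one ht]; linarith
    have h1 : t * l = a := by rw [hldef]; field_simp
    have h2 : t * (1 - l) = b := by rw [mul_sub, mul_one, h1]; rw [htdef]; ring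
    have hUz : U = t • z l := by
      rw [hz, hU, ← h1, ← h2]
      module
    have hcont : ContinuousOn (fun x : ℝ × ℝ => det2 x (z l)) K₁ := by
      apply Continuous.continuousOn
      simp only [det2]
      fun_prop
    obtain ⟨p, hpK₁, hpmax⟩ := hK₁c.exists_isMaxOn ⟨0, h0⟩ hcont
    have hpz : det2 p (z l) = s l := by
      apply le_antisymm
      · exact (le_abs_self _).trans (hsge l p hpK₁)
      · rw [hs]
        apply csSup_le (hne l)
        rintro y ⟨x, hx, rfl⟩
        show |det2 x (z l)| ≤ det2 p (z l)
        rw [abs_of_nonneg (hdznn l hl0 hl1 x hx)]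
        exact hpmax hx
    have hdetpU : det2 p U = t * s l := by rw [hUz, dsmulr, hpz]
    have hpUpos : 0 < det2 p U := by rw [hdetpU]; exact mul_pos ht (hspos l)
    have hmaxU : ∀ x ∈ K, |det2 x U| ≤ |det2 p U| := by
      intro x hx
      have e1 : det2 x U = t * det2 x (z l) := by rw [hUz, dsmulr]
      rw [e1, abs_mul, abs_of_pos ht, abs_of_pos hpUpos, hdetpU]
      exact mul_le_mul_of_nonneg_left (hKbound l hl0 hl1 x hx) ht.le
    have hpQ₁ : p ∈ Q₁ := by
      rw [hQ₁]
      exact ⟨det2 p w, det2 v p, (hmem p hpK₁).1, (hmem p hpK₁).2.2.1, repr p⟩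
    have hpK : p ∈ K := by rw [hK]; exact Or.inl (Or.inl (Or.inl hpK₁))
    have hpfr : p ∈ frontier K := by
      refine ⟨subset_closure hpK, ?_⟩
      intro hpint
      obtain ⟨ε, hε, hball⟩ := Metric.isOpen_iff.mp isOpen_interior p hpint
      set n : ℝ × ℝ := (-U.2, U.1) with hn
      have hnU : det2 n U = -(U.1 ^ 2 + U.2 ^ 2) := by
        simp only [det2, hn]; ring
      have hUsq : 0 < U.1 ^ 2 + U.2 ^ 2 := by
        rcases lt_or_eq_of_le (by positivity : (0:ℝ) ≤ U.1 ^ 2 + U.2 ^ 2) with h | h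
        · exact h
        · exfalso
          apply hune
          rw [hU]
          have e1 : U.1 = 0 := by nlinarith
          have e2 : U.2 = 0 := by nlinarith
          rw [← hU]
          exact Prod.ext e1 e2
      set δ := ε / (2 * (‖n‖ + 1)) with hδdef
      have hn1 : (0:ℝ) < ‖n‖ + 1 := by positivity
      have hδpos : 0 < δ := by positivity
      have hqball : p - δ • n ∈ Metric.ball p ε := by
        rw [Metric.mem_ball, dist_eq_norm]
        have e : p - δ • n - p = -(δ • n) := by abel
        rw [e, norm_neg, norm_smul, Real.norm_eq_abs, abs_of_pos hδpos]
        have h3 : δ * (2 * (‖n‖ + 1)) = ε := by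
          rw [hδdef]; field_simp
        nlinarith [norm_nonneg n]
      have hqK : p - δ • n ∈ K := interior_subset (hball hqball)
      have hcontr := hmaxU _ hqK
      have hdq : det2 (p - δ • n) U = det2 p U + δ * (U.1 ^ 2 + U.2 ^ 2) := by
        rw [dsub, dsmull, hnU]; ring
      rw [abs_of_pos hpUpos] at hcontr
      have h4 := le_abs_self (det2 (p - δ • n) U)
      nlinarith
    exact ⟨p, ⟨hpfr, hpQ₁⟩, hmaxU⟩
  -- Part 3
  · rintro p ⟨hpfr, hpQ₁⟩ hpv hpw u hune hsupp
    have hpK : p ∈ K := by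
      have h1 : p ∈ closure K := frontier_subset_closure hpfr
      rwa [hKclosed.closure_eq] at h1
    rw [hQ₁] at hpQ₁
    obtain ⟨a, b, ha, hb, hpab⟩ := hpQ₁
    have hA : det2 p w = a := by rw [hpab, dw]
    have hB : det2 v p = b := by rw [hpab, dv]
    set c := det2 u w with hcdef
    set d := det2 v u with hddef
    have hu : u = c • v + d • w := repr u
    have main : ∀ c' d' : ℝ,
        (∀ x ∈ K, det2 x (c' • v + d' • w) ≤ det2 p (c' • v + d' • w)) →
        ¬(0 < c' ∧ 0 < d') ∧ ¬(c' < 0 ∧ d' < 0) := by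
      intro c' d' hsup
      have hdp : det2 p (c' • v + d' • w) = a * d' - b * c' := by rw [hpab, dd]
      have hvK' : v ∈ K := by rw [hK]; exact Or.inl (Or.inl (Or.inl hvK))
      have hwK' : w ∈ K := by rw [hK]; exact Or.inl (Or.inl (Or.inl hwK))
      constructor
      · rintro ⟨hc, hd⟩
        have h1 : d' ≤ a * d' - b * c' := by
          have h := hsup v hvK'
          rwa [dv, hdp] at h
        have ha1 : 1 ≤ a := by nlinarith [mul_nonneg hb hc.le]
        rw [hK] at hpK
        rcases hpK with ((hp1 | hp2) | hp3) | hp4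
        · obtain ⟨_, hA1, _, _⟩ := hmem p hp1
          rw [hA] at hA1
          have haa : a = 1 := le_antisymm hA1 ha1
          have hb0 : b = 0 := by nlinarith
          exact hpv (by rw [hpab, haa, hb0]; simp)
        · obtain ⟨l, hl0, hl1, α, hα0, hαs, hpeq⟩ := hK₂elt p hp2
          have hav : a = α * (-l) := by
            rw [← hA, hpeq, dsmull, hzc, dw]
          nlinarith
        · obtain ⟨hA0, _, _, _⟩ := hmem (-p) (Set.mem_neg.mp hp3)
          rw [dneg, hA] at hA0
          linarith
        · obtain ⟨l, hl0, hl1, α, hα0, hαs, hpeq⟩ := hK₂elt (-p) (Set.mem_neg.mp hp4)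
          have hpe : p = (α * l) • v + (-(α * (1 - l))) • w := by
            have h5 : p = -(α • z l) := by rw [← hpeq]; simp
            rw [h5, hzc]
            module
          have hAa : a = α * l := by rw [← hA, hpe, dw]
          have hBb : b = -(α * (1 - l)) := by rw [← hB, hpe, dv]
          have hb0 : b = 0 := le_antisymm (by nlinarith) hb
          have ha1' : a ≤ 1 := by nlinarith [hsgel l]
          have haa : a = 1 := le_antisymm ha1' ha1
          exact hpv (by rw [hpab, haa, hb0]; simp)
      · rintro ⟨hc, hd⟩
        have h1 : -c' ≤ a * d' - b * c' := by
          have h := hsup w hwK'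
          rwa [dw2, hdp] at h
        have hb1 : 1 ≤ b := by
          nlinarith [mul_nonpos_of_nonneg_of_nonpos ha hd.le]
        rw [hK] at hpK
        rcases hpK with ((hp1 | hp2) | hp3) | hp4
        · obtain ⟨_, _, _, hB1⟩ := hmem p hp1
          rw [hB] at hB1
          have hbb : b = 1 := le_antisymm hB1 hb1
          have ha0 : a = 0 := by nlinarith
          exact hpw (by rw [hpab, ha0, hbb]; simp)
        · obtain ⟨l, hl0, hl1, α, hα0, hαs, hpeq⟩ := hK₂elt p hp2
          have hav : a = α * (-l) := by
            rw [← hA, hpeq, dsmull, hzc, dw]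
          have hbv : b = α * (1 - l) := by
            rw [← hB, hpeq]
            rw [dsmulr, hzc, dv]
          have ha0 : a = 0 := le_antisymm (by nlinarith) ha
          have hb1' : b ≤ 1 := by nlinarith [hsge1l l]
          have hbb : b = 1 := le_antisymm hb1' hb1
          exact hpw (by rw [hpab, ha0, hbb]; simp)
        · obtain ⟨_, _, hB0, _⟩ := hmem (-p) (Set.mem_neg.mp hp3)
          rw [dnegr, hB] at hB0
          linarith
        · obtain ⟨l, hl0, hl1, α, hα0, hαs, hpeq⟩ := hK₂elt (-p) (Set.mem_neg.mp hp4)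
          have hpe : p = (α * l) • v + (-(α * (1 - l))) • w := by
            have h5 : p = -(α • z l) := by rw [← hpeq]; simp
            rw [h5, hzc]
            module
          have hBb : b = -(α * (1 - l)) := by rw [← hB, hpe, dv]
          nlinarith [mul_nonneg hα0 (by linarith : (0:ℝ) ≤ 1 - l)]
    have hQmem : ∀ c' d' : ℝ, c' ≤ 0 → 0 ≤ d' → (c' • v + d' • w) ∈ Q₂ := by
      intro c' d' hc' hd'
      rw [hQ₂]
      exact ⟨-c', d', by linarith, hd', by module⟩
    have hQmem' : ∀ c' d' : ℝ, 0 ≤ c' → d' ≤ 0 → (c' • v + d' • w) ∈ -Q₂ := by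
      intro c' d' hc' hd'
      rw [Set.mem_neg, hQ₂]
      exact ⟨c', -d', hc', by linarith, by module⟩
    obtain ⟨h1, h2⟩ : ¬(0 < c ∧ 0 < d) ∧ ¬(c < 0 ∧ d < 0) := by
      rcases hsupp with hsup | hsup
      · exact main c d (by intro x hx; rw [← hu]; exact hsup x hx)
      · have h := main (-c) (-d) ?_
        · constructor
          · rintro ⟨hc', hd'⟩; exact h.2 ⟨by linarith, by linarith⟩
          · rintro ⟨hc', hd'⟩; exact h.1 ⟨by linarith, by linarith⟩
        · intro x hx
          have hnu : -u = (-c) • v + (-d) • w := by rw [hu]; module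
          rw [← hnu, dnegr, dnegr]
          have := hsup x hx
          linarith
    rw [hu]
    rcases le_or_gt c 0 with hc | hc
    · rcases le_or_gt 0 d with hd | hd
      · exact Set.mem_union_left _ (hQmem c d hc hd)
      · have hc0 : c = 0 := by
          rcases lt_or_eq_of_le hc with h | h
          · exact absurd ⟨h, hd⟩ h2
          · exact h
        exact Set.mem_union_right _ (hQmem' c d (le_of_eq hc0.symm) hd.le)
    · rcases le_or_gt d 0 with hd | hd
      · exact Set.mem_union_right _ (hQmem' c d hc.le hd)
      · exact absurd ⟨hc, hd⟩ h1
end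

section
/- Let v, w ∈ ℝ² be linearly independent with det(v, w) = 1, and let K₁ ⊆ ℝ² be a compact convex set with 0, v, w ∈ K₁ and K₁ ⊆ conv{0, v, w, v + w}. For λ ∈ [0,1] set z_λ := (1−λ)·w − λ·v, s(λ) := sup_{x ∈ K₁} |det(x, z_λ)|, and γ₂(λ) := s(λ)⁻¹·z_λ. For θ ∈ [0,1] set u_θ := (1−θ)·w + θ·v and f(θ) := sup{t ≥ 0 : t·u_θ ∈ K₁}. Then for every θ ∈ [0,1]: sup_{λ ∈ [0,1]} |det(γ₂(λ), u_θ)| = 1/f(θ). (Duality: repeating the construction starting from γ₂ in the second quadrant reproduces the original boundary arc of K₁ in the first quadrant.) -/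
private lemma det2_recon (v w x : ℝ × ℝ) (h : det2 v w = 1) :
    x = det2 x w • v + det2 v x • w := by
  simp only [det2] at h ⊢
  ext
  · simp only [Prod.fst_add, Prod.smul_fst, smul_eq_mul]; linear_combination -x.1 * h
  · simp only [Prod.snd_add, Prod.smul_snd, smul_eq_mul]; linear_combination -x.2 * h

private lemma det2_cont_left (y : ℝ × ℝ) : Continuous fun x : ℝ × ℝ => det2 x y := by
  unfold det2; fun_prop

private lemma det2_cont_right (y : ℝ × ℝ) : Continuous fun x : ℝ × ℝ => det2 y x := by
  unfold det2; fun_prop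

private lemma det2_lin_left (y : ℝ × ℝ) : IsLinearMap ℝ fun x : ℝ × ℝ => det2 x y := by
  constructor <;> intros <;> simp [det2] <;> ring

private lemma det2_lin_right (y : ℝ × ℝ) : IsLinearMap ℝ fun x : ℝ × ℝ => det2 y x := by
  constructor <;> intros <;> simp [det2] <;> ring

private lemma det2_comb (a b : ℝ) (x y c : ℝ × ℝ) :
    det2 (a • x + b • y) c = a * det2 x c + b * det2 y c := by
  simp [det2]; ring

private lemma det2_comb' (a b : ℝ) (x y c : ℝ × ℝ) :
    det2 c (a • x + b • y) = a * det2 c x + b * det2 c y := by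
  simp [det2]; ring

private lemma det2_smul_left (a : ℝ) (x c : ℝ × ℝ) : det2 (a • x) c = a * det2 x c := by
  simp [det2]; ring

/-- Duality of the Radon-curve construction: applying the construction to the
second-quadrant arc `γ₂` reproduces the original first-quadrant boundary arc;
in terms of radial functions, `sup_{λ∈[0,1]} |det(γ₂(λ), u_θ)| = 1/f(θ)`. -/
theorem stmt_9 (v w : ℝ × ℝ) (hind : LinearIndependent ℝ ![v, w])
    (hdet : det2 v w = 1)
    (K₁ : Set (ℝ × ℝ)) (hK₁c : IsCompact K₁) (hK₁conv : Convex ℝ K₁)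
    (h0 : (0 : ℝ × ℝ) ∈ K₁) (hvK : v ∈ K₁) (hwK : w ∈ K₁)
    (hK₁sub : K₁ ⊆ convexHull ℝ {0, v, w, v + w})
    (z : ℝ → ℝ × ℝ) (hz : ∀ l : ℝ, z l = (1 - l) • w - l • v)
    (s : ℝ → ℝ) (hs : ∀ l : ℝ, s l = sSup ((fun x => |det2 x (z l)|) '' K₁))
    (γ₂ : ℝ → ℝ × ℝ) (hγ₂ : ∀ l : ℝ, γ₂ l = (s l)⁻¹ • z l)
    (u : ℝ → ℝ × ℝ) (hu : ∀ θ : ℝ, u θ = (1 - θ) • w + θ • v)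
    (f : ℝ → ℝ) (hf : ∀ θ : ℝ, f θ = sSup {t : ℝ | 0 ≤ t ∧ t • u θ ∈ K₁}) :
    ∀ θ ∈ Set.Icc (0 : ℝ) 1,
      sSup ((fun l => |det2 (γ₂ l) (u θ)|) '' Set.Icc (0 : ℝ) 1) = (f θ)⁻¹ := by
  have hdet' : v.1 * w.2 - v.2 * w.1 = 1 := hdet
  -- z-coordinate expansion
  have hzx : ∀ l : ℝ, ∀ x : ℝ × ℝ, det2 x (z l) = (1 - l) * det2 x w + l * det2 v x := by
    intro l x
    rw [hz]
    simp only [det2, Prod.fst_sub, Prod.snd_sub, Prod.smul_fst, Prod.smul_snd, smul_eq_mul]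
    ring
  -- coordinate bounds on K₁
  have hcoord : ∀ x ∈ K₁, 0 ≤ det2 x w ∧ det2 x w ≤ 1 ∧ 0 ≤ det2 v x ∧ det2 v x ≤ 1 := by
    intro x hx
    have hconv : Convex ℝ {y : ℝ × ℝ |
        0 ≤ det2 y w ∧ det2 y w ≤ 1 ∧ 0 ≤ det2 v y ∧ det2 v y ≤ 1} := by
      intro p hp q hq a b ha hb hab
      simp only [Set.mem_setOf_eq] at hp hq ⊢
      rw [det2_comb, det2_comb']
      obtain ⟨hp1, hp2, hp3, hp4⟩ := hp
      obtain ⟨hq1, hq2, hq3, hq4⟩ := hq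
      refine ⟨by positivity, by nlinarith, by positivity, by nlinarith⟩
    have hgen : ({0, v, w, v + w} : Set (ℝ × ℝ)) ⊆ {y : ℝ × ℝ |
        0 ≤ det2 y w ∧ det2 y w ≤ 1 ∧ 0 ≤ det2 v y ∧ det2 v y ≤ 1} := by
      rintro y (rfl | rfl | rfl | rfl) <;>
        simp only [Set.mem_setOf_eq, det2, Prod.fst_add, Prod.snd_add, Prod.fst_zero,
          Prod.snd_zero] <;>
        refine ⟨by linarith, by linarith, by linarith, by linarith⟩
    exact convexHull_min hgen hconv (hK₁sub hx)
  -- the image sets defining s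
  have himg_ne : ∀ l : ℝ, ((fun x => |det2 x (z l)|) '' K₁).Nonempty :=
    fun l => ⟨_, Set.mem_image_of_mem _ hvK⟩
  have himg_bdd : ∀ l : ℝ, BddAbove ((fun x => |det2 x (z l)|) '' K₁) := by
    intro l
    exact hK₁c.bddAbove_image ((det2_cont_left (z l)).abs.continuousOn)
  -- lower bound for s
  have hs_pos : ∀ l ∈ Set.Icc (0 : ℝ) 1, 0 < s l := by
    intro l hl
    obtain ⟨hl0, hl1⟩ := hl
    have hv' : |det2 v (z l)| = 1 - l := by
      rw [hzx]
      have : det2 v w = 1 := hdet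
      have hvv : det2 v v = 0 := by simp [det2]; ring
      rw [this, hvv]
      rw [abs_of_nonneg (by linarith)]
      ring
    have hw' : |det2 w (z l)| = l := by
      rw [hzx]
      have hww : det2 w w = 0 := by simp [det2]; ring
      rw [hww, hdet]
      rw [abs_of_nonneg (by linarith)]
      ring
    have h1 : 1 - l ≤ s l := by
      have h1' := le_csSup (himg_bdd l) (Set.mem_image_of_mem (fun x => |det2 x (z l)|) hvK)
      beta_reduce at h1'
      rw [hv'] at h1'
      rw [hs]; exact h1'
    have h2 : l ≤ s l := by
      have h2' := le_csSup (himg_bdd l) (Set.mem_image_of_mem (fun x => |det2 x (z l)|) hwK)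
      beta_reduce at h2'
      rw [hw'] at h2'
      rw [hs]; exact h2'
    rcases le_or_gt l (1/2) with h | h
    · linarith
    · linarith
  -- now fix θ
  intro θ hθ
  obtain ⟨hθ0, hθ1⟩ := hθ
  -- the set S defining f θ
  set S : Set ℝ := {t : ℝ | 0 ≤ t ∧ t • u θ ∈ K₁} with hS
  have huθK : u θ ∈ K₁ := by
    have := hK₁conv hwK hvK (by linarith : (0:ℝ) ≤ 1 - θ) hθ0 (by ring)
    rwa [← hu] at this
  have h1S : (1 : ℝ) ∈ S := ⟨zero_le_one, by rw [one_smul]; exact huθK⟩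
  have hauθ : det2 (u θ) w = θ := by
    rw [hu]
    simp only [det2, Prod.fst_add, Prod.snd_add, Prod.smul_fst, Prod.smul_snd, smul_eq_mul]
    linear_combination θ * hdet'
  have hbuθ : det2 v (u θ) = 1 - θ := by
    rw [hu]
    simp only [det2, Prod.fst_add, Prod.snd_add, Prod.smul_fst, Prod.smul_snd, smul_eq_mul]
    linear_combination (1 - θ) * hdet'
  have hSbdd : BddAbove S := by
    refine ⟨2, fun t ht => ?_⟩
    obtain ⟨ht0, htK⟩ := ht
    have hc := hcoord _ htK
    rw [det2_smul_left] at hc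
    have hc2 : det2 v (t • u θ) = t * det2 v (u θ) := by
      simp [det2]; ring
    rw [hc2, hauθ, hbuθ] at hc
    nlinarith [hc.2.1, hc.2.2.2]
  have hSclosed : IsClosed S := by
    have : S = Set.Ici (0:ℝ) ∩ (fun t : ℝ => t • u θ) ⁻¹' K₁ := by
      ext t; simp [hS, Set.mem_Ici]
    rw [this]
    exact isClosed_Ici.inter (hK₁c.isClosed.preimage (by fun_prop))
  have hfθS : f θ ∈ S := by
    rw [hf]
    exact hSclosed.csSup_mem ⟨1, h1S⟩ hSbdd
  have hf1 : 1 ≤ f θ := by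
    rw [hf]; exact le_csSup hSbdd h1S
  have hfpos : 0 < f θ := by linarith
  set q : ℝ × ℝ := f θ • u θ with hq
  have hqK : q ∈ K₁ := hfθS.2
  have haq : det2 q w = f θ * θ := by rw [hq, det2_smul_left, hauθ]
  have hbq : det2 v q = f θ * (1 - θ) := by
    have : det2 v q = f θ * det2 v (u θ) := by simp [hq, det2]; ring
    rw [this, hbuθ]
  -- general upper bound : |det2 (γ₂ l) (u θ)| ≤ (f θ)⁻¹ for l ∈ [0,1]
  have hzu : ∀ l : ℝ, det2 (z l) (u θ) = -((1 - l) * θ + l * (1 - θ)) := by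
    intro l
    rw [hz, hu]
    simp only [det2, Prod.fst_sub, Prod.snd_sub, Prod.fst_add, Prod.snd_add,
      Prod.smul_fst, Prod.smul_snd, smul_eq_mul]
    linear_combination (-((1 - l) * θ + l * (1 - θ))) * hdet'
  have hval : ∀ l ∈ Set.Icc (0 : ℝ) 1,
      |det2 (γ₂ l) (u θ)| = (s l)⁻¹ * ((1 - l) * θ + l * (1 - θ)) := by
    intro l hl
    obtain ⟨hl0, hl1⟩ := hl
    rw [hγ₂, det2_smul_left, hzu, abs_mul, abs_neg,
      abs_of_nonneg (by nlinarith : (0:ℝ) ≤ (1 - l) * θ + l * (1 - θ)),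
      abs_of_nonneg (inv_nonneg.2 (hs_pos l ⟨hl0, hl1⟩).le)]
  have hub : ∀ l ∈ Set.Icc (0 : ℝ) 1, |det2 (γ₂ l) (u θ)| ≤ (f θ)⁻¹ := by
    intro l hl
    obtain ⟨hl0, hl1⟩ := hl
    rw [hval l ⟨hl0, hl1⟩]
    have hm : (0:ℝ) ≤ (1 - l) * θ + l * (1 - θ) := by nlinarith
    have hsl := hs_pos l ⟨hl0, hl1⟩
    have hkey : ((1 - l) * θ + l * (1 - θ)) * f θ ≤ s l := by
      have hmem : |det2 q (z l)| ∈ (fun x => |det2 x (z l)|) '' K₁ :=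
        Set.mem_image_of_mem _ hqK
      have hqz : |det2 q (z l)| = ((1 - l) * θ + l * (1 - θ)) * f θ := by
        rw [hzx, haq, hbq, abs_of_nonneg (by nlinarith)]
        ring
      rw [hs]
      rw [← hqz]
      exact le_csSup (himg_bdd l) hmem
    rw [show (s l)⁻¹ * ((1 - l) * θ + l * (1 - θ))
        = ((1 - l) * θ + l * (1 - θ)) / s l by ring,
      show (f θ)⁻¹ = 1 / f θ by ring, div_le_div_iff₀ hsl hfpos]
    linarith
  -- Separation: find λ* where the bound is attained
  set Q' : Set (ℝ × ℝ) :=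
    {x : ℝ × ℝ | det2 q w < det2 x w} ∩ {x : ℝ × ℝ | det2 v q < det2 v x} with hQ'
  have hQ'open : IsOpen Q' :=
    (isOpen_lt continuous_const (det2_cont_left w)).inter
      (isOpen_lt continuous_const (det2_cont_right v))
  have hQ'conv : Convex ℝ Q' :=
    (convex_halfSpace_gt (det2_lin_left w) (det2 q w)).inter
      (convex_halfSpace_gt (det2_lin_right v) (det2 v q))
  -- disjointness
  have hdisj : Disjoint Q' K₁ := by
    rw [Set.disjoint_left]
    rintro y ⟨hy1, hy2⟩ hyK
    simp only [Set.mem_setOf_eq] at hy1 hy2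
    obtain ⟨hay0, hay1, hby0, hby1⟩ := hcoord y hyK
    have hyrec : y = det2 y w • v + det2 v y • w := det2_recon v w y hdet
    obtain ⟨ay, hay⟩ : ∃ a : ℝ, det2 y w = a := ⟨_, rfl⟩
    obtain ⟨by', hby'⟩ : ∃ a : ℝ, det2 v y = a := ⟨_, rfl⟩
    rw [hay] at hay0 hay1 hy1 hyrec
    rw [hby'] at hby0 hby1 hy2 hyrec
    rw [haq] at hy1
    rw [hbq] at hy2
    have hε : (0:ℝ) < min (ay - f θ * θ) (by' - f θ * (1 - θ)) := by
      apply lt_min <;> linarith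
    set ε := min (ay - f θ * θ) (by' - f θ * (1 - θ)) with hεdef
    have hε1 : ε ≤ ay - f θ * θ := min_le_left _ _
    have hε2 : ε ≤ by' - f θ * (1 - θ) := min_le_right _ _
    have ht'pos : 0 < f θ + ε := by linarith
    have hθ1' : (0:ℝ) ≤ 1 - θ := by linarith
    have hA0 : 0 ≤ (f θ + ε) * θ := mul_nonneg ht'pos.le hθ0
    have hB0 : 0 ≤ (f θ + ε) * (1 - θ) := mul_nonneg ht'pos.le hθ1'
    have hAay : (f θ + ε) * θ ≤ ay := by nlinarith [mul_nonneg hε.le hθ1']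
    have hBby : (f θ + ε) * (1 - θ) ≤ by' := by nlinarith [mul_nonneg hε.le hθ0]
    have haypos : 0 < ay := lt_of_le_of_lt (mul_nonneg hfpos.le hθ0) hy1
    have hbypos : 0 < by' := lt_of_le_of_lt (mul_nonneg hfpos.le hθ1') hy2
    obtain ⟨α', hα'⟩ : ∃ a : ℝ, a = (f θ + ε) * θ / ay := ⟨_, rfl⟩
    obtain ⟨β', hβ'⟩ : ∃ a : ℝ, a = (f θ + ε) * (1 - θ) / by' := ⟨_, rfl⟩
    have hα'0 : 0 ≤ α' := hα' ▸ div_nonneg hA0 haypos.le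
    have hα'1 : α' ≤ 1 := hα' ▸ (div_le_one haypos).2 hAay
    have hβ'0 : 0 ≤ β' := hβ' ▸ div_nonneg hB0 hbypos.le
    have hβ'1 : β' ≤ 1 := hβ' ▸ (div_le_one hbypos).2 hBby
    -- membership chain
    have mem1 : ay • v ∈ K₁ := by
      have h := hK₁conv h0 hvK (by linarith : (0:ℝ) ≤ 1 - ay) hay0 (by ring)
      simpa using h
    have mem2 : by' • w ∈ K₁ := by
      have h := hK₁conv h0 hwK (by linarith : (0:ℝ) ≤ 1 - by') hby0 (by ring)
      simpa using h
    have memP : (1 - β') • (ay • v) + β' • y ∈ K₁ :=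
      hK₁conv mem1 hyK (by linarith) hβ'0 (by ring)
    have memQ0 : β' • (by' • w) ∈ K₁ := by
      have h := hK₁conv h0 mem2 (by linarith : (0:ℝ) ≤ 1 - β') hβ'0 (by ring)
      simpa using h
    have memX : (1 - α') • (β' • (by' • w))
        + α' • ((1 - β') • (ay • v) + β' • y) ∈ K₁ :=
      hK₁conv memQ0 memP (by linarith) hα'0 (by ring)
    have hXeq : (1 - α') • (β' • (by' • w))
        + α' • ((1 - β') • (ay • v) + β' • y) = (f θ + ε) • u θ := by
      have e1 : α' * ay = (f θ + ε) * θ := by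
        rw [hα']; field_simp
      have e2 : β' * by' = (f θ + ε) * (1 - θ) := by
        rw [hβ']; field_simp
      rw [hu]
      conv_lhs => rw [hyrec]
      ext
      · simp only [Prod.fst_add, Prod.smul_fst, smul_eq_mul]
        linear_combination v.1 * e1 + w.1 * e2
      · simp only [Prod.snd_add, Prod.smul_snd, smul_eq_mul]
        linear_combination v.2 * e1 + w.2 * e2
    have ht'S : f θ + ε ∈ S := ⟨ht'pos.le, by rw [← hXeq]; exact memX⟩
    have hcontra : f θ + ε ≤ f θ := by
      nth_rewrite 2 [hf θ]
      exact le_csSup hSbdd ht'S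
    linarith
  -- separation
  obtain ⟨φ, c, hφ1, hφ2⟩ := geometric_hahn_banach_open hQ'conv hQ'open hK₁conv hdisj
  have hφx : ∀ x : ℝ × ℝ, φ x = det2 x w * φ v + det2 v x * φ w := by
    intro x
    conv_lhs => rw [det2_recon v w x hdet]
    rw [map_add, map_smul, map_smul]
    simp [smul_eq_mul]
  have hmemQ : ∀ t e : ℝ, 0 < t → 0 < e → q + t • v + e • w ∈ Q' := by
    intro t e ht he
    have k1 : det2 (q + t • v + e • w) w = det2 q w + t := by
      simp only [det2, Prod.fst_add, Prod.snd_add, Prod.smul_fst, Prod.smul_snd, smul_eq_mul]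
      linear_combination t * hdet'
    have k2 : det2 v (q + t • v + e • w) = det2 v q + e := by
      simp only [det2, Prod.fst_add, Prod.snd_add, Prod.smul_fst, Prod.smul_snd, smul_eq_mul]
      linear_combination e * hdet'
    refine ⟨?_, ?_⟩ <;> simp only [Set.mem_setOf_eq]
    · rw [k1]; linarith
    · rw [k2]; linarith
  have hφadd : ∀ t e : ℝ, φ (q + t • v + e • w) = φ q + t * φ v + e * φ w := by
    intro t e
    rw [map_add, map_add, map_smul, map_smul]
    simp [smul_eq_mul]
  have hkey : ∀ t e : ℝ, 0 < t → 0 < e → t * φ v + e * φ w < 0 := by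
    intro t e ht he
    have h1 := hφ1 _ (hmemQ t e ht he)
    have h2 := hφ2 q hqK
    rw [hφadd] at h1
    linarith
  have hDpos : 0 < -(φ v) + -(φ w) := by
    have := hkey 1 1 one_pos one_pos
    linarith
  have hv0 : φ v ≤ 0 := by
    by_contra h
    push_neg at h
    have ht : 0 < (|φ w| + 1) / φ v := by positivity
    have hk := hkey _ 1 ht one_pos
    rw [div_mul_cancel₀ _ (ne_of_gt h)] at hk
    have := neg_abs_le (φ w)
    linarith
  have hw0 : φ w ≤ 0 := by
    by_contra h
    push_neg at h
    have ht : 0 < (|φ v| + 1) / φ w := by positivity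
    have hk := hkey 1 _ one_pos ht
    rw [div_mul_cancel₀ _ (ne_of_gt h)] at hk
    have := neg_abs_le (φ v)
    linarith
  have hφqc : φ q ≤ c := by
    refine le_of_forall_pos_le_add ?_
    intro δ hδ
    have ht : 0 < δ / (-(φ v) + -(φ w)) := by positivity
    have h1 := hφ1 _ (hmemQ _ _ ht ht)
    rw [hφadd] at h1
    have he : δ / (-(φ v) + -(φ w)) * (-(φ v) + -(φ w)) = δ :=
      div_mul_cancel₀ δ (ne_of_gt hDpos)
    nlinarith [h1, he]
  have hsep : ∀ x ∈ K₁, (-(φ v)) * det2 x w + (-(φ w)) * det2 v x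
      ≤ (-(φ v)) * (f θ * θ) + (-(φ w)) * (f θ * (1 - θ)) := by
    intro x hx
    have hx' := hφ2 x hx
    have h1 := hφx x
    have h2 := hφx q
    rw [haq, hbq] at h2
    linarith [h1, h2, hx', hφqc]
  -- the optimal parameter
  obtain ⟨lst, hlst⟩ : ∃ a : ℝ, a = (-(φ w)) / (-(φ v) + -(φ w)) := ⟨_, rfl⟩
  have hlst0 : 0 ≤ lst := hlst ▸ div_nonneg (by linarith) hDpos.le
  have hlst1 : lst ≤ 1 := hlst ▸ (div_le_one hDpos).2 (by linarith)
  have hlstmem : lst ∈ Set.Icc (0:ℝ) 1 := ⟨hlst0, hlst1⟩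
  have hslb : s lst ≤ f θ * ((1 - lst) * θ + lst * (1 - θ)) := by
    rw [hs]
    refine csSup_le (himg_ne lst) ?_
    rintro r ⟨x, hxK, rfl⟩
    obtain ⟨hx1, hx2, hx3, hx4⟩ := hcoord x hxK
    beta_reduce
    rw [hzx, abs_of_nonneg (add_nonneg (mul_nonneg (by linarith : (0:ℝ) ≤ 1 - lst) hx1)
      (mul_nonneg hlst0 hx3))]
    have hsx := hsep x hxK
    have hDne : -(φ v) + -(φ w) ≠ 0 := ne_of_gt hDpos
    have hl1 : lst * (-(φ v) + -(φ w)) = -(φ w) := by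
      rw [hlst]; exact div_mul_cancel₀ _ hDne
    have eL : (1 - lst) * det2 x w + lst * det2 v x
        = ((-(φ v)) * det2 x w + (-(φ w)) * det2 v x) / (-(φ v) + -(φ w)) := by
      rw [eq_div_iff hDne]
      linear_combination (det2 v x - det2 x w) * hl1
    have eR : f θ * ((1 - lst) * θ + lst * (1 - θ))
        = ((-(φ v)) * (f θ * θ) + (-(φ w)) * (f θ * (1 - θ))) / (-(φ v) + -(φ w)) := by
      rw [eq_div_iff hDne]
      linear_combination (f θ * (1 - 2*θ)) * hl1
    rw [eL, eR]
    gcongr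
  have hmpos : 0 < (1 - lst) * θ + lst * (1 - θ) := by
    have hsp := hs_pos lst hlstmem
    by_contra h
    push_neg at h
    have h2 : f θ * ((1 - lst) * θ + lst * (1 - θ)) ≤ f θ * 0 :=
      mul_le_mul_of_nonneg_left h hfpos.le
    rw [mul_zero] at h2
    linarith
  have hattain : |det2 (γ₂ lst) (u θ)| = (f θ)⁻¹ := by
    refine le_antisymm (hub lst hlstmem) ?_
    rw [hval lst hlstmem]
    rw [show (s lst)⁻¹ * ((1 - lst) * θ + lst * (1 - θ))
        = ((1 - lst) * θ + lst * (1 - θ)) / s lst by ring, inv_eq_one_div,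
      div_le_div_iff₀ hfpos (hs_pos lst hlstmem)]
    linarith
  -- conclusion
  refine le_antisymm ?_ ?_
  · refine csSup_le ((Set.nonempty_Icc.2 zero_le_one).image _) ?_
    rintro r ⟨l, hl, rfl⟩
    exact hub l hl
  · refine le_csSup ⟨(f θ)⁻¹, ?_⟩ ⟨lst, hlstmem, hattain⟩
    rintro r ⟨l, hl, rfl⟩
    exact hub l hl
end

section
/- Let (E, ‖·‖) be a two-dimensional real normed space and let ω be a nonzero alternating bilinear form on E. Define the antinorm by ‖x‖ₐ := sup{|ω(y, x)| : y ∈ E, ‖y‖ = 1}. Then Birkhoff orthogonality is a symmetric relation on E (i.e., for all x, y ∈ E, x ⊣_B y implies y ⊣_B x) if and only if there exists λ > 0 such that ‖x‖ = λ·‖x‖ₐ for all x ∈ E. -/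
/-- Birkhoff orthogonality: `x ⊣_B y` iff `‖x‖ ≤ ‖x + t • y‖` for every `t`. -/
def BirkhoffOrth {E : Type*} [NormedAddCommGroup E] [NormedSpace ℝ E]
    (x y : E) : Prop := ∀ t : ℝ, ‖x‖ ≤ ‖x + t • y‖

/-- The antinorm associated to a determinant form `ω`. -/
noncomputable def antinorm {E : Type*} [NormedAddCommGroup E] [NormedSpace ℝ E]
    (ω : E →ₗ[ℝ] E →ₗ[ℝ] ℝ) (x : E) : ℝ :=
  sSup ((fun y => |ω y x|) '' Metric.sphere (0 : E) 1)

/-!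
In the plane, `x ⊣_B y` holds iff `|ω x y| = ‖x‖ * ‖y‖ₐ`: the antinorm `‖y‖ₐ` is the dual norm of
the functional `ω · y`, whose kernel is the line through `y`. This makes the easy direction a
one-line computation.

For the converse we show that `ρ = ‖·‖ₐ / ‖·‖` is constant along every line `y + t v` missing the
origin. Let `D` be the right derivative of the convex function `t ↦ ‖y + t v‖` at `0`. The vector
`w = ‖y‖ v - D y` spans the kernel of a norming functional of `y`, so `y ⊣_B w`; by symmetry
`w ⊣_B y`, i.e. `ω w ·` attains the antinorm at `y`. Testing `ω w ·` at `y + h v` gives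
`‖y + h v‖ₐ ≥ ρ(y) (‖y‖ + h D) = ρ(y) ‖y + h v‖ - o(h)`, so `ρ` has nonnegative lower right Dini
derivative along the line and is nondecreasing; running the line backwards, it is constant.
Two nonzero vectors not joined by such a line are proportional, and `ρ` is homogeneous of
degree `0`.
-/

open Module Filter Topology Set

section

variable {E : Type*} [NormedAddCommGroup E] [NormedSpace ℝ E]

theorem BirkhoffOrth.abs_mul_norm_le {x y : E} (h : BirkhoffOrth x y) (a b : ℝ) :
    |a| * ‖x‖ ≤ ‖a • x + b • y‖ := by
  rcases eq_or_ne a 0 with rfl | ha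
  · simp
  calc |a| * ‖x‖ ≤ |a| * ‖x + (b / a) • y‖ := by gcongr; exact h _
    _ = ‖a • x + b • y‖ := by
        rw [← Real.norm_eq_abs, ← norm_smul, smul_add, smul_smul, mul_div_cancel₀ _ ha]

theorem BirkhoffOrth.smul_self_eq_zero {x : E} {s : ℝ} (h : BirkhoffOrth x (s • x)) :
    s • x = 0 := by
  rcases eq_or_ne s 0 with rfl | hs
  · simp
  have := h.abs_mul_norm_le 1 (-s⁻¹)
  rw [smul_smul, neg_mul, inv_mul_cancel₀ hs, one_smul, neg_one_smul, add_neg_cancel,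
    norm_zero, abs_one, one_mul, norm_le_zero_iff] at this
  simp [this]

theorem birkhoffOrth_of_forall_add_mul_le {x v : E} {D : ℝ}
    (hD : ∀ t : ℝ, ‖x‖ + t * D ≤ ‖x + t • v‖) : BirkhoffOrth x (‖x‖ • v - D • x) := by
  intro s
  have hDv : |D| ≤ ‖v‖ := by
    have h₁ := hD 1
    have h₂ := hD (-1)
    rw [one_smul, one_mul] at h₁
    rw [neg_one_smul, neg_one_mul, ← sub_eq_add_neg] at h₂
    rw [abs_le]
    constructor <;> linarith [norm_add_le x v, norm_add_le x (-v), norm_neg v]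
  have hexp : x + s • (‖x‖ • v - D • x) = (1 - s * D) • x + (s * ‖x‖) • v := by module
  rw [hexp]
  rcases lt_or_ge 0 (1 - s * D) with ha | ha
  · calc ‖x‖ = (1 - s * D) * (‖x‖ + s * ‖x‖ / (1 - s * D) * D) := by field_simp; ring
      _ ≤ (1 - s * D) * ‖x + (s * ‖x‖ / (1 - s * D)) • v‖ := by gcongr; exact hD _
      _ = ‖(1 - s * D) • (x + (s * ‖x‖ / (1 - s * D)) • v)‖ := by
          rw [norm_smul, Real.norm_eq_abs, abs_of_pos ha]
      _ = ‖(1 - s * D) • x + (s * ‖x‖) • v‖ := by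
          rw [smul_add, smul_smul, mul_div_cancel₀ _ ha.ne']
  · have hsD : s * D ≤ |s| * ‖v‖ :=
      (le_abs_self _).trans (by rw [abs_mul]; gcongr)
    have hnorm := norm_sub_le ((1 - s * D) • x + (s * ‖x‖) • v) ((1 - s * D) • x)
    rw [add_sub_cancel_left, norm_smul, norm_smul, Real.norm_eq_abs, Real.norm_eq_abs,
      abs_mul, abs_norm, abs_of_nonpos ha] at hnorm
    nlinarith [norm_nonneg x]

theorem convexOn_norm_add_smul (x v : E) : ConvexOn ℝ univ fun s : ℝ => ‖x + s • v‖ := by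
  refine ⟨convex_univ, fun a _ b _ μ ν hμ hν hμν => ?_⟩
  calc ‖x + (μ • a + ν • b) • v‖ = ‖μ • (x + a • v) + ν • (x + b • v)‖ := by
        rw [smul_add, smul_add, smul_smul, smul_smul, add_add_add_comm, ← add_smul, hμν,
          one_smul, ← add_smul]
        rfl
    _ ≤ μ • ‖x + a • v‖ + ν • ‖x + b • v‖ := by
        refine (norm_add_le _ _).trans_eq ?_
        rw [norm_smul, norm_smul, Real.norm_of_nonneg hμ, Real.norm_of_nonneg hν]
        rfl

theorem ConvexOn.add_mul_rightDeriv_le {f : ℝ → ℝ} (hf : ConvexOn ℝ univ f) (x y : ℝ) :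
    f x + (y - x) * derivWithin f (Ioi x) x ≤ f y := by
  have hx : x ∈ interior univ := by simp
  rcases lt_trichotomy x y with hxy | rfl | hyx
  · have := hf.rightDeriv_le_slope_of_mem_interior hx (mem_univ y) hxy
    rw [slope_def_field, le_div_iff₀ (sub_pos.2 hxy)] at this
    linarith
  · simp
  · have h₁ := hf.slope_le_leftDeriv_of_mem_interior (mem_univ y) hx hyx
    have h₂ := hf.leftDeriv_le_rightDeriv_of_mem_interior hx
    rw [slope_def_field, div_le_iff₀ (sub_pos.2 hyx)] at h₁
    nlinarith

theorem le_of_forall_eventually_lt_slope {f : ℝ → ℝ} {a b : ℝ} (hab : a ≤ b)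
    (hf : ContinuousOn f (Icc a b))
    (hslope : ∀ t ∈ Ico a b, ∀ r < 0, ∀ᶠ z in 𝓝[>] t, r < slope f t z) : f a ≤ f b := by
  have := image_le_of_liminf_slope_right_le_deriv_boundary (f := -f) (B := fun _ => -f a)
    (B' := 0) hf.neg le_rfl continuousOn_const (fun _ _ => hasDerivWithinAt_const _ _ _)
    (fun t ht r (hr : 0 < r) => ((hslope t ht (-r) (neg_lt_zero.2 hr)).mono fun z hz => by
      simp only [slope_neg_fun, Pi.neg_apply]; linarith).frequently) (right_mem_Icc.2 hab)
  simpa using this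

variable {ω : E →ₗ[ℝ] E →ₗ[ℝ] ℝ}

theorem LinearMap.IsAlt.apply_smul_eq_of_finrank_eq_two (hdim : finrank ℝ E = 2)
    (halt : ω.IsAlt) (x y z : E) : ω x y • z = ω z y • x + ω x z • y := by
  have : Module.Finite ℝ E := Module.finite_of_finrank_eq_succ hdim
  let b := finBasisOfFinrankEq ℝ E hdim
  have hb (u : E) : ∃ c₀ c₁ : ℝ, u = c₀ • b 0 + c₁ • b 1 :=
    ⟨b.repr u 0, b.repr u 1, by rw [← Fin.sum_univ_two (fun i => b.repr u i • b i), b.sum_repr]⟩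
  obtain ⟨x₀, x₁, rfl⟩ := hb x
  obtain ⟨y₀, y₁, rfl⟩ := hb y
  obtain ⟨z₀, z₁, rfl⟩ := hb z
  simp only [map_add, map_smul, LinearMap.add_apply, LinearMap.smul_apply, smul_eq_mul,
    halt.self_eq_zero, ← halt.neg (b 0) (b 1)]
  module

theorem LinearMap.IsAlt.exists_apply_ne_zero (hdim : finrank ℝ E = 2) (halt : ω.IsAlt)
    (hω : ω ≠ 0) {x : E} (hx : x ≠ 0) : ∃ z, ω z x ≠ 0 := by
  obtain ⟨x₀, y₀, h₀⟩ : ∃ x₀ y₀, ω x₀ y₀ ≠ 0 := by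
    by_contra! h
    exact hω (LinearMap.ext₂ h)
  by_contra! h
  have := halt.apply_smul_eq_of_finrank_eq_two hdim x₀ y₀ x
  rw [← halt.neg y₀ x, h, h, neg_zero, zero_smul, zero_smul, add_zero] at this
  exact hx ((smul_eq_zero.1 this).resolve_left h₀)

theorem LinearMap.IsAlt.exists_eq_smul_of_apply_eq_zero (hdim : finrank ℝ E = 2) (halt : ω.IsAlt)
    (hω : ω ≠ 0) {x y : E} (hx : x ≠ 0) (hxy : ω x y = 0) : ∃ s : ℝ, y = s • x := by
  obtain ⟨z, hz⟩ := halt.exists_apply_ne_zero hdim hω hx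
  refine ⟨(ω z x)⁻¹ * ω z y, ?_⟩
  have := halt.apply_smul_eq_of_finrank_eq_two hdim z x y
  rw [← halt.neg x y, hxy, neg_zero, zero_smul, zero_add] at this
  rw [mul_smul, ← this, inv_smul_smul₀ hz]

theorem LinearMap.IsAlt.add_smul_ne_zero_of_apply_ne_zero (halt : ω.IsAlt) {x v : E} (hxv : ω x v ≠ 0)
    (s : ℝ) : x + s • v ≠ 0 := by
  intro h
  apply hxv
  simpa [halt.self_eq_zero] using congrArg (fun u => ω u v) h

section FiniteDimensional

variable [FiniteDimensional ℝ E]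

theorem antinorm_eq_norm_toContinuousLinearMap (ω : E →ₗ[ℝ] E →ₗ[ℝ] ℝ) (x : E) :
    antinorm ω x = ‖LinearMap.toContinuousLinearMap (ω.flip x)‖ := by
  rw [← ContinuousLinearMap.sSup_sphere_eq_norm]
  simp [antinorm]

@[simp]
theorem antinorm_zero : antinorm ω 0 = 0 := by
  simp [antinorm_eq_norm_toContinuousLinearMap]

theorem antinorm_smul (c : ℝ) (x : E) : antinorm ω (c • x) = |c| * antinorm ω x := by
  simp [antinorm_eq_norm_toContinuousLinearMap, norm_smul]

theorem abs_apply_le_norm_mul_antinorm (z x : E) : |ω z x| ≤ ‖z‖ * antinorm ω x := by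
  rw [antinorm_eq_norm_toContinuousLinearMap, mul_comm]
  simpa using (LinearMap.toContinuousLinearMap (ω.flip x)).le_opNorm z

theorem antinorm_le_of_forall {x : E} {C : ℝ} (hC : 0 ≤ C) (h : ∀ z, |ω z x| ≤ C * ‖z‖) :
    antinorm ω x ≤ C := by
  rw [antinorm_eq_norm_toContinuousLinearMap]
  exact ContinuousLinearMap.opNorm_le_bound _ hC (by simpa using h)

theorem continuous_antinorm : Continuous (antinorm ω) := by
  have := (LinearMap.continuous_of_finiteDimensional
    (LinearMap.toContinuousLinearMap.toLinearMap ∘ₗ ω.flip)).norm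
  simpa [← antinorm_eq_norm_toContinuousLinearMap] using this

theorem antinorm_pos (hdim : finrank ℝ E = 2) (halt : ω.IsAlt) (hω : ω ≠ 0) {x : E}
    (hx : x ≠ 0) : 0 < antinorm ω x := by
  obtain ⟨z, hz⟩ := halt.exists_apply_ne_zero hdim hω hx
  exact pos_of_mul_pos_right ((abs_pos.2 hz).trans_le (abs_apply_le_norm_mul_antinorm z x))
    (norm_nonneg z)

theorem BirkhoffOrth.norm_mul_antinorm_le (hdim : finrank ℝ E = 2) (halt : ω.IsAlt)
    (hω : ω ≠ 0) {x y : E} (h : BirkhoffOrth x y) : ‖x‖ * antinorm ω y ≤ |ω x y| := by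
  rcases eq_or_ne x 0 with rfl | hx
  · simp
  rcases eq_or_ne (ω x y) 0 with hxy | hxy
  · obtain ⟨s, rfl⟩ := halt.exists_eq_smul_of_apply_eq_zero hdim hω hx hxy
    simp [h.smul_self_eq_zero]
  have hxpos : 0 < ‖x‖ := norm_pos_iff.2 hx
  rw [← le_div_iff₀' hxpos]
  refine antinorm_le_of_forall (by positivity) fun z => ?_
  rw [div_mul_eq_mul_div, le_div_iff₀ hxpos]
  have := h.abs_mul_norm_le (ω z y) (ω x z)
  rwa [← halt.apply_smul_eq_of_finrank_eq_two hdim, norm_smul, Real.norm_eq_abs] at this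

theorem birkhoffOrth_iff (hdim : finrank ℝ E = 2) (halt : ω.IsAlt) (hω : ω ≠ 0) {x y : E} :
    BirkhoffOrth x y ↔ |ω x y| = ‖x‖ * antinorm ω y := by
  refine ⟨fun h => (abs_apply_le_norm_mul_antinorm x y).antisymm
    (h.norm_mul_antinorm_le hdim halt hω), fun h t => ?_⟩
  rcases eq_or_ne y 0 with rfl | hy
  · simp
  refine le_of_mul_le_mul_right ?_ (antinorm_pos hdim halt hω hy)
  calc ‖x‖ * antinorm ω y = |ω (x + t • y) y| := by simp [h, halt.self_eq_zero]
    _ ≤ ‖x + t • y‖ * antinorm ω y := abs_apply_le_norm_mul_antinorm _ _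

theorem birkhoffOrth_symm_of_norm_eq_mul_antinorm (hdim : finrank ℝ E = 2)
    (halt : ω.IsAlt) (hω : ω ≠ 0) {lam : ℝ} (h : ∀ x : E, ‖x‖ = lam * antinorm ω x) {x y : E}
    (hxy : BirkhoffOrth x y) : BirkhoffOrth y x := by
  rw [birkhoffOrth_iff hdim halt hω] at hxy ⊢
  rw [← halt.neg, abs_neg, hxy, h x, h y]
  ring

theorem antinorm_mul_add_mul_le (hdim : finrank ℝ E = 2) (halt : ω.IsAlt) (hω : ω ≠ 0)
    (hsym : ∀ x y : E, BirkhoffOrth x y → BirkhoffOrth y x) {y v : E} (hyv : ω y v ≠ 0)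
    {D : ℝ} (hD : ∀ t : ℝ, ‖y‖ + t * D ≤ ‖y + t • v‖) (h : ℝ) :
    antinorm ω y * (‖y‖ + h * D) ≤ ‖y‖ * antinorm ω (y + h • v) := by
  set w := ‖y‖ • v - D • y
  have hwy : |ω w y| = ‖w‖ * antinorm ω y :=
    (birkhoffOrth_iff hdim halt hω).1 (hsym _ _ (birkhoffOrth_of_forall_add_mul_le hD))
  have hw : 0 < ‖w‖ := by
    refine norm_pos_iff.2 fun hw => hyv ?_
    have hy : ‖y‖ ≠ 0 := norm_ne_zero_iff.2 fun h0 => by simp [h0] at hyv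
    have := congrArg (ω y) hw
    simp only [w, map_sub, map_smul, halt.self_eq_zero, smul_eq_mul, mul_zero, sub_zero,
      map_zero] at this
    exact (mul_eq_zero.1 this).resolve_left hy
  have hle := abs_apply_le_norm_mul_antinorm (ω := ω) w (y + h • v)
  have hw_y : ω w y = ‖y‖ * ω v y := by simp [w, halt.self_eq_zero]
  have hw_line : ω w (y + h • v) = (‖y‖ + h * D) * ω v y := by
    simp [w, halt.self_eq_zero, ← halt.neg y v]
    ring
  rw [hw_line, abs_mul] at hle
  rw [hw_y, abs_mul, abs_norm] at hwy
  refine le_of_mul_le_mul_left ?_ hw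
  calc ‖w‖ * (antinorm ω y * (‖y‖ + h * D)) = ‖y‖ * |ω v y| * (‖y‖ + h * D) := by
        rw [hwy]; ring
    _ ≤ ‖y‖ * |ω v y| * |‖y‖ + h * D| := by gcongr; exact le_abs_self _
    _ ≤ ‖y‖ * (‖w‖ * antinorm ω (y + h • v)) := by rw [mul_assoc, mul_comm |ω v y|]; gcongr
    _ = ‖w‖ * (‖y‖ * antinorm ω (y + h • v)) := by ring

theorem eventually_lt_slope_antinorm_div_norm (hdim : finrank ℝ E = 2) (halt : ω.IsAlt)
    (hω : ω ≠ 0) (hsym : ∀ x y : E, BirkhoffOrth x y → BirkhoffOrth y x) {x v : E}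
    (hxv : ω x v ≠ 0) (t : ℝ) {r : ℝ} (hr : r < 0) :
    ∀ᶠ z in 𝓝[>] t, r < slope (fun s => antinorm ω (x + s • v) / ‖x + s • v‖) t z := by
  set N : ℝ → ℝ := fun s => ‖x + s • v‖
  set A : ℝ → ℝ := fun s => antinorm ω (x + s • v)
  have hN (s : ℝ) : 0 < N s := norm_pos_iff.2 (halt.add_smul_ne_zero_of_apply_ne_zero hxv s)
  have hNc : Continuous N := by fun_prop
  have hconv : ConvexOn ℝ univ N := convexOn_norm_add_smul x v
  set D := derivWithin N (Ioi t) t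
  have hderiv : Tendsto (slope N t) (𝓝[>] t) (𝓝 D) :=
    (hasDerivWithinAt_iff_tendsto_slope' self_notMem_Ioi).1
      (hconv.hasDerivWithinAt_rightDeriv_of_mem_interior (by simp))
  have hbound (z : ℝ) (hz : t < z) :
      A t / (N t * N z) * (D - slope N t z) ≤ slope (fun s => A s / N s) t z := by
    have hkey := antinorm_mul_add_mul_le hdim halt hω hsym (y := x + t • v) (v := v)
      (by simpa [halt.self_eq_zero] using hxv)
      (fun h => by simpa [add_assoc, ← add_smul] using hconv.add_mul_rightDeriv_le t (t + h))
      (z - t)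
    rw [add_assoc, ← add_smul, add_sub_cancel] at hkey
    have hzt : 0 < z - t := sub_pos.2 hz
    have hNt := hN t
    have hNz := hN z
    rw [slope_def_field, slope_def_field]
    field_simp
    simp only [A, N] at hkey ⊢
    nlinarith
  have hlim : Tendsto (fun z => A t / (N t * N z) * (D - slope N t z)) (𝓝[>] t) (𝓝 0) := by
    have hNt : Tendsto N (𝓝[>] t) (𝓝 (N t)) := (hNc.tendsto t).mono_left nhdsWithin_le_nhds
    have := ((tendsto_const_nhds (x := A t)).div (tendsto_const_nhds.mul hNt)
      (mul_pos (hN t) (hN t)).ne').mul ((tendsto_const_nhds (x := D)).sub hderiv)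
    rwa [sub_self, mul_zero] at this
  filter_upwards [hlim.eventually (lt_mem_nhds hr), self_mem_nhdsWithin] with z hz hzt
  exact hz.trans_le (hbound z hzt)

theorem antinorm_div_norm_le (hdim : finrank ℝ E = 2) (halt : ω.IsAlt) (hω : ω ≠ 0)
    (hsym : ∀ x y : E, BirkhoffOrth x y → BirkhoffOrth y x) {p q : E} (hpq : ω p q ≠ 0) :
    antinorm ω p / ‖p‖ ≤ antinorm ω q / ‖q‖ := by
  have hline : ω p (q - p) ≠ 0 := by simpa [halt.self_eq_zero] using hpq
  have hcont : Continuous fun s : ℝ => antinorm ω (p + s • (q - p)) / ‖p + s • (q - p)‖ :=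
    (continuous_antinorm.comp (by fun_prop)).div (by fun_prop)
      fun s => norm_ne_zero_iff.2 (halt.add_smul_ne_zero_of_apply_ne_zero hline s)
  simpa using le_of_forall_eventually_lt_slope zero_le_one hcont.continuousOn
    fun t _ r hr => eventually_lt_slope_antinorm_div_norm hdim halt hω hsym hline t hr

theorem antinorm_div_norm_eq (hdim : finrank ℝ E = 2) (halt : ω.IsAlt) (hω : ω ≠ 0)
    (hsym : ∀ x y : E, BirkhoffOrth x y → BirkhoffOrth y x) {p q : E} (hp : p ≠ 0)
    (hq : q ≠ 0) : antinorm ω p / ‖p‖ = antinorm ω q / ‖q‖ := by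
  rcases eq_or_ne (ω p q) 0 with hpq | hpq
  · obtain ⟨s, rfl⟩ := halt.exists_eq_smul_of_apply_eq_zero hdim hω hp hpq
    have hs : s ≠ 0 := by rintro rfl; simp at hq
    rw [antinorm_smul, norm_smul, Real.norm_eq_abs, mul_div_mul_left _ _ (abs_ne_zero.2 hs)]
  · exact (antinorm_div_norm_le hdim halt hω hsym hpq).antisymm
      (antinorm_div_norm_le hdim halt hω hsym (by rwa [← halt.neg, neg_ne_zero]))

theorem exists_norm_eq_mul_antinorm (hdim : finrank ℝ E = 2) (halt : ω.IsAlt) (hω : ω ≠ 0)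
    (hsym : ∀ x y : E, BirkhoffOrth x y → BirkhoffOrth y x) :
    ∃ lam : ℝ, 0 < lam ∧ ∀ x : E, ‖x‖ = lam * antinorm ω x := by
  have : Nontrivial E := Module.nontrivial_of_finrank_pos (R := ℝ) (by omega)
  obtain ⟨e, he⟩ := exists_ne (0 : E)
  have hAe := antinorm_pos hdim halt hω he
  refine ⟨‖e‖ / antinorm ω e, div_pos (norm_pos_iff.2 he) hAe, fun x => ?_⟩
  rcases eq_or_ne x 0 with rfl | hx
  · simp
  have hratio := antinorm_div_norm_eq hdim halt hω hsym hx he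
  have hAx := antinorm_pos hdim halt hω hx
  field_simp at hratio ⊢
  linarith

end FiniteDimensional

end

/-- In a normed plane, Birkhoff orthogonality is symmetric iff the norm is a
positive multiple of its antinorm. -/
theorem stmt_11 {E : Type*} [NormedAddCommGroup E] [NormedSpace ℝ E]
    (hdim : Module.finrank ℝ E = 2)
    (ω : E →ₗ[ℝ] E →ₗ[ℝ] ℝ) (halt : ∀ x : E, ω x x = 0) (hω : ω ≠ 0) :
    (∀ x y : E, BirkhoffOrth x y → BirkhoffOrth y x) ↔
      ∃ lam : ℝ, 0 < lam ∧ ∀ x : E, ‖x‖ = lam * antinorm ω x := by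
  have : FiniteDimensional ℝ E := Module.finite_of_finrank_eq_succ hdim
  exact ⟨exists_norm_eq_mul_antinorm hdim halt hω, fun ⟨_, _, h⟩ _ _ =>
    birkhoffOrth_symm_of_norm_eq_mul_antinorm hdim halt hω h⟩
end

section
/- Let (E, ‖·‖) be a two-dimensional real normed space, let ω be a nonzero alternating bilinear form on E, and define the antinorm ‖x‖ₐ := sup{|ω(y, x)| : y ∈ E, ‖y‖ = 1}. Then for every x ∈ E and every y ∈ E with ‖y‖ = 1, the supremum is attained at y, i.e., |ω(y, x)| = ‖x‖ₐ, if and only if y is Birkhoff orthogonal to x. -/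
lemma nondeg_aux {E : Type*} [AddCommGroup E] [Module ℝ E]
    (hdim : Module.finrank ℝ E = 2)
    (ω : E →ₗ[ℝ] E →ₗ[ℝ] ℝ) (halt : ∀ x : E, ω x x = 0) (hω : ω ≠ 0)
    {x : E} (hx : ∀ z : E, ω z x = 0) : x = 0 := by
  have hfd : FiniteDimensional ℝ E := FiniteDimensional.of_finrank_eq_succ hdim
  have hskew : ∀ a b : E, ω b a = - ω a b := by
    intro a b
    have h := halt (a + b)
    simp only [map_add, LinearMap.add_apply, halt] at h
    linarith
  have hab : ∃ a b : E, ω a b ≠ 0 := by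
    by_contra h
    push_neg at h
    exact hω (by ext a b; simp [h])
  obtain ⟨a, b, hab⟩ := hab
  have li : LinearIndependent ℝ ![a, b] := by
    rw [LinearIndependent.pair_iff]
    intro s t hst
    by_contra hc
    push_neg at hc
    rcases eq_or_ne s 0 with hs | hs
    · have ht := hc hs
      have : t • b = 0 := by rw [← hst, hs]; simp
      have hb0 : b = 0 := by
        rcases smul_eq_zero.mp this with h | h
        · exact absurd h ht
        · exact h
      exact hab (by simp [hb0])
    · have : ω (s • a + t • b) b = 0 := by rw [hst]; simp
      simp only [map_add, map_smul, LinearMap.add_apply, LinearMap.smul_apply,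
        smul_eq_mul, halt] at this
      have : s * ω a b = 0 := by linarith
      rcases mul_eq_zero.mp this with h | h
      · exact hs h
      · exact hab h
  have hcard : Fintype.card (Fin 2) = Module.finrank ℝ E := by simp [hdim]
  let B := basisOfLinearIndependentOfCardEqFinrank li hcard
  have hB : ⇑B = ![a, b] := coe_basisOfLinearIndependentOfCardEqFinrank li hcard
  have hxrepr : x = B.repr x 0 • a + B.repr x 1 • b := by
    conv_lhs => rw [← B.sum_repr x]
    rw [Fin.sum_univ_two, hB]
    simp
  have h1 : ω a x = 0 := hx a
  have h2 : ω b x = 0 := hx b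
  rw [hxrepr] at h1 h2
  simp only [map_add, map_smul, LinearMap.smul_apply, smul_eq_mul, halt] at h1 h2
  have hba : ω b a = - ω a b := hskew a b
  have ht : B.repr x 1 = 0 := by
    have := h1
    rcases mul_eq_zero.mp (by linarith : B.repr x 1 * ω a b = 0) with h | h
    · exact h
    · exact absurd h hab
  have hs : B.repr x 0 = 0 := by
    rw [hba] at h2
    rcases mul_eq_zero.mp (by linarith : B.repr x 0 * ω a b = 0) with h | h
    · exact h
    · exact absurd h hab
  rw [hxrepr, hs, ht]
  simp

/-- The supremum defining the antinorm of `x` is attained at a unit vector `y`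
iff `y` is Birkhoff orthogonal to `x`. -/
theorem stmt_14 {E : Type*} [NormedAddCommGroup E] [NormedSpace ℝ E]
    (hdim : Module.finrank ℝ E = 2)
    (ω : E →ₗ[ℝ] E →ₗ[ℝ] ℝ) (halt : ∀ x : E, ω x x = 0) (hω : ω ≠ 0) :
    ∀ (x y : E), ‖y‖ = 1 → (|ω y x| = antinorm ω x ↔ BirkhoffOrth y x) := by
  have hfd : FiniteDimensional ℝ E := FiniteDimensional.of_finrank_eq_succ hdim
  intro x y hy
  have hymem : y ∈ Metric.sphere (0 : E) 1 := by
    simp [mem_sphere_zero_iff_norm, hy]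
  set S : Set ℝ := (fun z => |ω z x|) '' Metric.sphere (0 : E) 1 with hSdef
  have hA : antinorm ω x = sSup S := rfl
  have hSne : S.Nonempty := ⟨|ω y x|, y, hymem, rfl⟩
  set F : E →L[ℝ] ℝ := LinearMap.toContinuousLinearMap ((LinearMap.flip ω) x) with hF
  have hFapp : ∀ z : E, F z = ω z x := fun z => rfl
  have hbdd : BddAbove S := by
    refine ⟨‖F‖, ?_⟩
    rintro _ ⟨z, hz, rfl⟩
    rw [mem_sphere_zero_iff_norm] at hz
    calc |ω z x| = ‖F z‖ := by rw [hFapp]; rfl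
      _ ≤ ‖F‖ * ‖z‖ := F.le_opNorm z
      _ = ‖F‖ := by rw [hz, mul_one]
  have hle : |ω y x| ≤ antinorm ω x := by
    rw [hA]; exact le_csSup hbdd ⟨y, hymem, rfl⟩
  constructor
  · -- forward
    intro h t
    by_cases h0 : antinorm ω x = 0
    · -- antinorm zero: then x = 0
      have hzero : ∀ z : E, ω z x = 0 := by
        intro z
        rcases eq_or_ne z 0 with rfl | hz
        · simp
        · have hnz : ‖z‖ ≠ 0 := norm_ne_zero_iff.mpr hz
          have hmem : ‖z‖⁻¹ • z ∈ Metric.sphere (0 : E) 1 := by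
            simp [mem_sphere_zero_iff_norm, norm_smul, inv_mul_cancel₀ hnz]
          have hle2 : |ω (‖z‖⁻¹ • z) x| ≤ sSup S := le_csSup hbdd ⟨_, hmem, rfl⟩
          rw [← hA, h0] at hle2
          have heq : |ω (‖z‖⁻¹ • z) x| = 0 :=
            le_antisymm hle2 (abs_nonneg _)
          have : ω (‖z‖⁻¹ • z) x = 0 := abs_eq_zero.mp heq
          simp only [map_smul, LinearMap.smul_apply, smul_eq_mul] at this
          rcases mul_eq_zero.mp this with hh | hh
          · exact absurd hh (inv_ne_zero hnz)
          · exact hh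
      have hx0 : x = 0 := nondeg_aux hdim ω halt hω hzero
      rw [hx0]
      simp [hy]
    · -- antinorm positive
      have hpos : 0 < |ω y x| :=
        abs_pos.mpr (fun hzz => h0 (by rw [← h, hzz, abs_zero]))
      have hv : y + t • x ≠ 0 := by
        intro hv0
        have hyx : y = -(t • x) := eq_neg_of_add_eq_zero_left hv0
        have : ω y x = 0 := by
          rw [hyx]; simp [halt]
        rw [this, abs_zero] at hpos
        exact lt_irrefl 0 hpos
      have hnv : ‖y + t • x‖ ≠ 0 := norm_ne_zero_iff.mpr hv
      have hmem : ‖y + t • x‖⁻¹ • (y + t • x) ∈ Metric.sphere (0 : E) 1 := by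
        rw [mem_sphere_zero_iff_norm, norm_smul, Real.norm_eq_abs, abs_inv, abs_norm,
          inv_mul_cancel₀ hnv]
      have hle2 : |ω (‖y + t • x‖⁻¹ • (y + t • x)) x| ≤ sSup S :=
        le_csSup hbdd ⟨_, hmem, rfl⟩
      have hval : ω (‖y + t • x‖⁻¹ • (y + t • x)) x = ‖y + t • x‖⁻¹ * ω y x := by
        simp [map_add, map_smul, halt]
      rw [hval, abs_mul, abs_inv, abs_norm, ← hA, ← h] at hle2
      have hnvpos : 0 < ‖y + t • x‖ := (norm_nonneg _).lt_of_ne' hnv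
      rw [hy]
      by_contra hc
      push_neg at hc
      have h2 : 1 < ‖y + t • x‖⁻¹ := one_lt_inv₀ hnvpos |>.mpr hc
      nlinarith
  · -- reverse
    intro hB
    rcases eq_or_ne x 0 with rfl | hx
    · have hall : ∀ r ∈ S, r = 0 := by
        rintro _ ⟨z, hz, rfl⟩
        simp
      have h0 : antinorm ω 0 = 0 := by
        rw [hA]
        refine le_antisymm (csSup_le hSne fun r hr => le_of_eq (hall r hr)) ?_
        obtain ⟨r, hr⟩ := hSne
        rw [← hall r hr]
        exact le_csSup hbdd hr
      rw [h0]
      simp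
    · have li : LinearIndependent ℝ ![y, x] := by
        rw [linearIndependent_fin2]
        refine ⟨by simpa using hx, fun a ha => ?_⟩
        simp only [Matrix.cons_val_one, Matrix.head_cons, Matrix.cons_val_zero] at ha
        have h1 := hB (-a)
        rw [hy, neg_smul, ha] at h1
        simp at h1
        linarith
      have hcard : Fintype.card (Fin 2) = Module.finrank ℝ E := by simp [hdim]
      let B := basisOfLinearIndependentOfCardEqFinrank li hcard
      have hBc : ⇑B = ![y, x] := coe_basisOfLinearIndependentOfCardEqFinrank li hcard
      have hrepr : ∀ z : E, z = B.repr z 0 • y + B.repr z 1 • x := by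
        intro z
        conv_lhs => rw [← B.sum_repr z]
        rw [Fin.sum_univ_two, hBc]
        simp
      have hcoord : ∀ z : E, |B.repr z 0| ≤ ‖z‖ := by
        intro z
        set s := B.repr z 0 with hs
        set t := B.repr z 1 with ht
        rcases eq_or_ne s 0 with hs0 | hs0
        · rw [hs0, abs_zero]; exact norm_nonneg z
        · have hzeq : z = s • (y + (t / s) • x) := by
            rw [smul_add, smul_smul, mul_div_cancel₀ _ hs0]
            exact hrepr z
          calc |s| = |s| * 1 := (mul_one _).symm
            _ ≤ |s| * ‖y + (t / s) • x‖ := by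
                have := hB (t / s)
                rw [hy] at this
                exact mul_le_mul_of_nonneg_left this (abs_nonneg s)
            _ = ‖z‖ := by rw [hzeq, norm_smul, Real.norm_eq_abs]
      have key : ∀ r ∈ S, r ≤ |ω y x| := by
        rintro _ ⟨z, hz, rfl⟩
        rw [mem_sphere_zero_iff_norm] at hz
        have hzv : ω z x = B.repr z 0 * ω y x := by
          conv_lhs => rw [hrepr z]
          simp [map_add, map_smul, halt]
        show |ω z x| ≤ |ω y x|
        rw [hzv, abs_mul]
        have h1 : |B.repr z 0| ≤ 1 := by rw [← hz]; exact hcoord z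
        nlinarith [abs_nonneg (ω y x)]
      exact le_antisymm hle (by rw [hA]; exact csSup_le hSne key)
end
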